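/- arXiv:0905.3250 — 9 statements merged into one kernel-verified Lean document; each statement's English description precedes it below -/
import Mathlib

section
/- Let Δ be a fundamental discriminant, c a positive integer, D = c²·Δ, and N a positive integer. Then there exists an integer B with B² ≡ D (mod 4N) if and only if for every prime p dividing N one of the following holds: (1) Δ is a nonzero square modulo p when p is odd (respectively Δ ≡ 1 (mod 8) when p = 2); (2) Δ is a non-square unit modulo p when p is odd (respectively Δ ≡ 5 (mod 8) when p = 2) and v_p(N) ≤ 2·v_p(c); (3) p divides Δ and v_p(N) ≤ 2·v_p(c) + 1. Here v_p denotes the p-adic valuation. -/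
/-!
By the Chinese remainder theorem, `D` is a square modulo `4N` if and only if it is a square
modulo each prime power exactly dividing `4N`. If `D = p ^ a * u` with `p ∤ u`, then `D` is a
square modulo `p ^ e` if and only if `e ≤ a`, or `a` is even and `u` is a square modulo
`p ^ (e - a)`. For odd `p`, a fundamental discriminant satisfies `p ^ 2 ∤ Δ`, so
`a = 2 v_p(c)` or `2 v_p(c) + 1`, and by Hensel's lemma a unit is a square modulo `p ^ j`,
`j ≥ 1`, as soon as it is one modulo `p`. For `p = 2`, the `2`-part of `Δ` is `1`, `8`, or `4`
with odd part `≡ 3 (mod 4)`, and an odd `u` is a square modulo `2 ^ j` if and only if `j ≤ 1`,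
or `j = 2` and `u ≡ 1 (mod 4)`, or `u ≡ 1 (mod 8)`.
-/

/-- A fundamental discriminant: either `Δ ≡ 1 (mod 4)` and `Δ` squarefree, or
`Δ = 4m` with `m` squarefree and `m ≡ 2` or `3 (mod 4)`. -/
def IsFundamentalDiscriminant (Δ : ℤ) : Prop :=
  (Δ % 4 = 1 ∧ Squarefree Δ) ∨
    (∃ m : ℤ, Δ = 4 * m ∧ Squarefree m ∧ (m % 4 = 2 ∨ m % 4 = 3))

open Function Polynomial

namespace Int

theorem exists_sq_modEq_iff_isSquare (m : ℕ) (D : ℤ) :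
    (∃ B : ℤ, B ^ 2 ≡ D [ZMOD m]) ↔ IsSquare (D : ZMod m) := by
  simp only [← ZMod.intCast_eq_intCast_iff]
  constructor
  · rintro ⟨B, hB⟩
    exact ⟨B, by rw [← hB]; push_cast; ring⟩
  · rintro ⟨r, hr⟩
    obtain ⟨B, rfl⟩ := ZMod.intCast_surjective r
    exact ⟨B, by push_cast; rw [hr]; ring⟩

theorem exists_sq_modEq_prod_iff {ι : Type*} [Fintype ι] {m : ι → ℕ}
    (hm : Pairwise (Nat.Coprime on m)) (D : ℤ) :
    (∃ B : ℤ, B ^ 2 ≡ D [ZMOD (∏ i, m i : ℕ)]) ↔ ∀ i, ∃ B : ℤ, B ^ 2 ≡ D [ZMOD m i] := by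
  simp only [exists_sq_modEq_iff_isSquare]
  set e := ZMod.prodEquivPi m hm
  have he : e D = fun i => (D : ZMod (m i)) := map_intCast e D
  constructor
  · intro h i
    obtain ⟨r, hr⟩ := he ▸ h.map e
    exact ⟨r i, congrFun hr i⟩
  · intro h
    choose r hr using h
    have : IsSquare (e D) := ⟨r, by rw [he]; exact funext hr⟩
    simpa using this.map e.symm

theorem exists_sq_modEq_iff_forall_prime_pow {n : ℕ} (hn : n ≠ 0) (D : ℤ) :
    (∃ B : ℤ, B ^ 2 ≡ D [ZMOD n]) ↔
      ∀ p : ℕ, p.Prime → ∃ B : ℤ, B ^ 2 ≡ D [ZMOD (p : ℤ) ^ n.factorization p] := by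
  have hprod : ∏ p : n.primeFactors, (p : ℕ) ^ n.factorization p = n := by
    rw [Finset.prod_coe_sort n.primeFactors (fun p => p ^ n.factorization p)]
    exact Nat.prod_factorization_pow_eq_self hn
  have hcop : Pairwise (Nat.Coprime on fun p : n.primeFactors => (p : ℕ) ^ n.factorization p) :=
    fun p q hpq => Nat.Coprime.pow _ _ <|
      (Nat.coprime_primes (Nat.prime_of_mem_primeFactors p.2)
        (Nat.prime_of_mem_primeFactors q.2)).2 (Subtype.coe_injective.ne hpq)
  conv_lhs => rw [← hprod]
  rw [exists_sq_modEq_prod_iff hcop]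
  constructor
  · intro h p hp
    by_cases hpn : p ∈ n.primeFactors
    · simpa using h ⟨p, hpn⟩
    · rw [← Nat.support_factorization, Finsupp.notMem_support_iff] at hpn
      exact ⟨0, by simp [hpn, Int.modEq_one]⟩
  · intro h p
    simpa using h p (Nat.prime_of_mem_primeFactors p.2)

theorem exists_sq_modEq_sq_mul_iff {c m : ℤ} (h : IsCoprime c m) (u : ℤ) :
    (∃ B : ℤ, B ^ 2 ≡ c ^ 2 * u [ZMOD m]) ↔ ∃ B : ℤ, B ^ 2 ≡ u [ZMOD m] := by
  obtain ⟨s, t, hst⟩ := h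
  have hsc : s * c ≡ 1 [ZMOD m] := Int.modEq_iff_dvd.2 ⟨t, by linarith⟩
  constructor
  · rintro ⟨B, hB⟩
    refine ⟨s * B, ?_⟩
    calc (s * B) ^ 2 = s ^ 2 * B ^ 2 := by ring
      _ ≡ s ^ 2 * (c ^ 2 * u) [ZMOD m] := hB.mul_left _
      _ = (s * c) ^ 2 * u := by ring
      _ ≡ 1 ^ 2 * u [ZMOD m] := (hsc.pow 2).mul_right _
      _ = u := by ring
  · rintro ⟨B, hB⟩
    exact ⟨c * B, by rw [mul_pow]; exact hB.mul_left _⟩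

theorem exists_sq_modEq_prime_sq_mul_iff {p : ℤ} (hp : Prime p) (w : ℤ) (k : ℕ) :
    (∃ B : ℤ, B ^ 2 ≡ p ^ 2 * w [ZMOD p ^ (k + 2)]) ↔ ∃ y : ℤ, y ^ 2 ≡ w [ZMOD p ^ k] := by
  rw [pow_add, mul_comm (p ^ k)]
  constructor
  · rintro ⟨B, hB⟩
    have hB0 : B ^ 2 ≡ 0 [ZMOD p] :=
      (hB.of_dvd ((dvd_pow_self p two_ne_zero).mul_right _)).trans
        (Int.modEq_zero_iff_dvd.2 ((dvd_pow_self p two_ne_zero).mul_right _))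
    obtain ⟨y, rfl⟩ := hp.dvd_of_dvd_pow (Int.modEq_zero_iff_dvd.1 hB0)
    rw [mul_pow] at hB
    exact ⟨y, Int.ModEq.mul_left_cancel' (pow_ne_zero 2 hp.ne_zero) hB⟩
  · rintro ⟨y, hy⟩
    exact ⟨p * y, by rw [mul_pow]; exact hy.mul_left'⟩

theorem not_exists_sq_modEq_prime_mul {p u : ℤ} (hp : Prime p) (hu : ¬ p ∣ u) {k : ℕ}
    (hk : 2 ≤ k) : ¬ ∃ B : ℤ, B ^ 2 ≡ p * u [ZMOD p ^ k] := by
  rintro ⟨B, hB⟩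
  have hB0 : B ^ 2 ≡ 0 [ZMOD p] :=
    (hB.of_dvd (dvd_pow_self p (by omega))).trans (Int.modEq_zero_iff_dvd.2 (dvd_mul_right p u))
  obtain ⟨y, rfl⟩ := hp.dvd_of_dvd_pow (Int.modEq_zero_iff_dvd.1 hB0)
  have hpu : p * u ≡ 0 [ZMOD p * p] :=
    (hB.symm.of_dvd (by rw [← sq]; exact pow_dvd_pow p hk)).trans
      (Int.modEq_zero_iff_dvd.2 ⟨y ^ 2, by ring⟩)
  exact hu (Int.dvd_of_mul_dvd_mul_left hp.ne_zero (Int.modEq_zero_iff_dvd.1 hpu))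

theorem exists_sq_modEq_prime_pow_mul_iff {p u : ℤ} (hp : Prime p) (hu : ¬ p ∣ u)
    (a k : ℕ) :
    (∃ B : ℤ, B ^ 2 ≡ p ^ a * u [ZMOD p ^ k]) ↔
      k ≤ a ∨ (Even a ∧ ∃ y : ℤ, y ^ 2 ≡ u [ZMOD p ^ (k - a)]) := by
  rcases le_or_gt k a with hka | hak
  · exact iff_of_true ⟨0, by simpa [Int.modEq_iff_dvd] using (pow_dvd_pow p hka).mul_right u⟩
      (Or.inl hka)
  simp only [not_le.2 hak, false_or]
  induction a using Nat.twoStepInduction generalizing k with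
  | zero => simp
  | one =>
    simpa using not_exists_sq_modEq_prime_mul hp hu (k := k) (by omega)
  | more a ih _ =>
    obtain ⟨k, rfl⟩ : ∃ k', k = k' + 2 := ⟨k - 2, by omega⟩
    rw [show p ^ (a + 2) * u = p ^ 2 * (p ^ a * u) by ring,
      exists_sq_modEq_prime_sq_mul_iff hp, ih k (by omega),
      Nat.add_sub_add_right]
    simp [Nat.even_add]

theorem exists_eq_pow_padicValInt_mul {p : ℕ} (hp : p.Prime) {c : ℤ} (hc : c ≠ 0) :
    ∃ c' : ℤ, c = (p : ℤ) ^ padicValInt p c * c' ∧ ¬ (p : ℤ) ∣ c' := by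
  have := Fact.mk hp
  obtain ⟨c', hc'⟩ := padicValInt_dvd (p := p) c
  refine ⟨c', hc', fun hdvd => ?_⟩
  have : (p : ℤ) ^ (padicValInt p c + 1) ∣ c := by
    conv_rhs => rw [hc']
    rw [pow_succ]
    exact mul_dvd_mul_left _ hdvd
  have := (padicValInt_dvd_iff _ c).1 this
  omega

theorem exists_sq_modEq_pow_of_norm_lt {p : ℕ} [Fact p.Prime] {x u : ℤ}
    (h : ‖((x ^ 2 - u : ℤ) : ℤ_[p])‖ < ‖((2 * x : ℤ) : ℤ_[p])‖ ^ 2) (k : ℕ) :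
    ∃ B : ℤ, B ^ 2 ≡ u [ZMOD (p : ℤ) ^ k] := by
  obtain ⟨z, hz, -⟩ := hensels_lemma (F := (X ^ 2 - C u : ℤ[X])) (a := (x : ℤ_[p]))
    (by simpa [map_ofNat] using h)
  obtain ⟨B, hB⟩ := ZMod.intCast_surjective (PadicInt.toZModPow k z)
  refine ⟨B, ?_⟩
  have hz' : z ^ 2 = u := by simpa [sub_eq_zero] using hz
  have : ((B ^ 2 : ℤ) : ZMod (p ^ k)) = (u : ZMod (p ^ k)) := by
    rw [Int.cast_pow, hB, ← map_pow, hz', map_intCast]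
  exact_mod_cast (ZMod.intCast_eq_intCast_iff _ _ _).1 this

theorem exists_sq_modEq_prime_pow_iff {p : ℕ} (hp : p.Prime) (hp2 : p ≠ 2) {u : ℤ}
    (hu : ¬ (p : ℤ) ∣ u) (j : ℕ) :
    (∃ y : ℤ, y ^ 2 ≡ u [ZMOD (p : ℤ) ^ j]) ↔ j = 0 ∨ ∃ x : ℤ, x ^ 2 ≡ u [ZMOD p] := by
  have := Fact.mk hp
  have hpI : Prime (p : ℤ) := Nat.prime_iff_prime_int.mp hp
  constructor
  · rintro ⟨y, hy⟩
    rcases Nat.eq_zero_or_pos j with hj | hj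
    · exact Or.inl hj
    · exact Or.inr ⟨y, hy.of_dvd (dvd_pow_self _ hj.ne')⟩
  rintro (rfl | ⟨x, hx⟩)
  · exact ⟨0, by simp [Int.modEq_one]⟩
  have hp2x : ¬ (p : ℤ) ∣ 2 * x := by
    refine hpI.not_dvd_mul (fun h => hp2 ?_) (fun h => hu ?_)
    · exact (Nat.prime_dvd_prime_iff_eq hp Nat.prime_two).1 (by exact_mod_cast h)
    · exact Int.modEq_zero_iff_dvd.1
        (hx.symm.trans (Int.modEq_zero_iff_dvd.2 (dvd_pow h two_ne_zero)))
  refine exists_sq_modEq_pow_of_norm_lt (x := x) ?_ j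
  calc ‖((x ^ 2 - u : ℤ) : ℤ_[p])‖ < 1 := (PadicInt.norm_int_lt_one_iff_dvd _).2 hx.symm.dvd
    _ ≤ ‖((2 * x : ℤ) : ℤ_[p])‖ ^ 2 :=
      one_le_pow₀ (not_lt.1 (mt (PadicInt.norm_int_lt_one_iff_dvd _).1 hp2x))

theorem exists_sq_modEq_two_pow_of_modEq_one {u : ℤ} (hu : u ≡ 1 [ZMOD 8]) (j : ℕ) :
    ∃ y : ℤ, y ^ 2 ≡ u [ZMOD 2 ^ j] := by
  refine exists_sq_modEq_pow_of_norm_lt (p := 2) (x := 1) ?_ j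
  calc ‖((1 ^ 2 - u : ℤ) : ℤ_[2])‖ ≤ (2 : ℝ) ^ (-3 : ℤ) :=
        PadicInt.norm_int_le_pow_iff_dvd.2 (by simpa using hu.dvd)
    _ < ‖((2 * 1 : ℤ) : ℤ_[2])‖ ^ 2 := by
        have h2 : ‖(2 : ℤ_[2])‖ = 2⁻¹ := by simpa using PadicInt.norm_p (p := 2)
        rw [mul_one, Int.cast_ofNat, h2]
        norm_num

theorem sq_mod_eight_eq_one_of_odd {y : ℤ} (hy : Odd y) : y ^ 2 % 8 = 1 := by
  obtain ⟨t, rfl⟩ := hy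
  obtain ⟨s, hs⟩ := Int.even_mul_succ_self t
  rw [show (2 * t + 1) ^ 2 = 8 * s + 1 by linear_combination 4 * hs]
  omega

theorem exists_sq_modEq_two_pow_iff {u : ℤ} (hu : ¬ 2 ∣ u) (j : ℕ) :
    (∃ y : ℤ, y ^ 2 ≡ u [ZMOD 2 ^ j]) ↔
      j ≤ 1 ∨ (j ≤ 2 ∧ u ≡ 1 [ZMOD 4]) ∨ u ≡ 1 [ZMOD 8] := by
  constructor
  · rintro ⟨y, hy⟩
    rcases Nat.lt_or_ge j 2 with hj | hj
    · exact Or.inl (by omega)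
    have hy4 : y ^ 2 ≡ u [ZMOD 4] := hy.of_dvd (by simpa using pow_dvd_pow (2 : ℤ) hj)
    have hyodd : Odd y := by
      by_contra hyev
      have : (4 : ℤ) ∣ y ^ 2 := by
        simpa using pow_dvd_pow_of_dvd (even_iff_two_dvd.1 (Int.not_odd_iff_even.1 hyev)) 2
      unfold Int.ModEq at hy4
      omega
    have hy8 := sq_mod_eight_eq_one_of_odd hyodd
    rcases Nat.lt_or_ge j 3 with hj3 | hj3
    · unfold Int.ModEq at hy4 ⊢
      omega
    · have := hy.of_dvd (by simpa using pow_dvd_pow (2 : ℤ) hj3)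
      unfold Int.ModEq at this ⊢
      omega
  · rintro (hj | ⟨hj, hu4⟩ | hu8)
    · exact ⟨1, Int.ModEq.of_dvd (pow_dvd_pow 2 hj) (by unfold Int.ModEq; omega)⟩
    · exact ⟨1, Int.ModEq.of_dvd (pow_dvd_pow 2 hj) (by simpa using hu4.symm)⟩
    · exact exists_sq_modEq_two_pow_of_modEq_one hu8 j

theorem exists_sq_modEq_sq_mul_prime_pow_iff {p : ℕ} (hp : p.Prime) (hp2 : p ≠ 2) {c Δ : ℤ}
    (hc : c ≠ 0) (hΔ : ¬ (p : ℤ) ^ 2 ∣ Δ) (k : ℕ) :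
    (∃ B : ℤ, B ^ 2 ≡ c ^ 2 * Δ [ZMOD (p : ℤ) ^ k]) ↔
      ((¬ (p : ℤ) ∣ Δ ∧ ∃ x : ℤ, x ^ 2 ≡ Δ [ZMOD (p : ℤ)]) ∨
       ((¬ (p : ℤ) ∣ Δ ∧ ¬ ∃ x : ℤ, x ^ 2 ≡ Δ [ZMOD (p : ℤ)]) ∧ k ≤ 2 * padicValInt p c) ∨
       ((p : ℤ) ∣ Δ ∧ k ≤ 2 * padicValInt p c + 1)) := by
  have hpI : Prime (p : ℤ) := Nat.prime_iff_prime_int.mp hp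
  obtain ⟨c', hcc', hc'⟩ := exists_eq_pow_padicValInt_mul hp hc
  set v := padicValInt p c
  have hc'2 : ¬ (p : ℤ) ∣ c' ^ 2 := mt hpI.dvd_of_dvd_pow hc'
  by_cases hpΔ : (p : ℤ) ∣ Δ
  · obtain ⟨δ, rfl⟩ := hpΔ
    have hδ : ¬ (p : ℤ) ∣ δ := fun h => hΔ (by rw [sq]; exact mul_dvd_mul_left _ h)
    rw [show c ^ 2 * (p * δ) = (p : ℤ) ^ (2 * v + 1) * (c' ^ 2 * δ) by rw [hcc']; ring,
      exists_sq_modEq_prime_pow_mul_iff hpI (hpI.not_dvd_mul hc'2 hδ)]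
    simp
  · rw [show c ^ 2 * Δ = (p : ℤ) ^ (2 * v) * (c' ^ 2 * Δ) by rw [hcc']; ring,
      exists_sq_modEq_prime_pow_mul_iff hpI (hpI.not_dvd_mul hc'2 hpΔ),
      exists_sq_modEq_sq_mul_iff ((hpI.coprime_iff_not_dvd.2 hc').symm.pow_right),
      exists_sq_modEq_prime_pow_iff hp hp2 hpΔ]
    by_cases hQR : ∃ x : ℤ, x ^ 2 ≡ Δ [ZMOD (p : ℤ)]
    · simp [hpΔ, hQR]
    · simp only [even_two_mul, hpΔ, hQR, not_false_eq_true, true_and, and_true, false_and,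
        or_false, false_or]
      omega

end Int

theorem IsFundamentalDiscriminant.not_prime_sq_dvd {Δ : ℤ} (hΔ : IsFundamentalDiscriminant Δ)
    {p : ℕ} (hp : p.Prime) (hp2 : p ≠ 2) : ¬ (p : ℤ) ^ 2 ∣ Δ := by
  have hpu : ¬ IsUnit (p : ℤ) := (Nat.prime_iff_prime_int.mp hp).not_isUnit
  intro hdvd
  rw [sq] at hdvd
  rcases hΔ with ⟨-, hsf⟩ | ⟨m, rfl, hsf, -⟩
  · exact hpu (hsf _ hdvd)
  · have hcop : IsCoprime ((p : ℤ) * p) 4 := by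
      have h2 : IsCoprime (p : ℤ) 2 :=
        Nat.isCoprime_iff_coprime.2 ((Nat.coprime_primes hp Nat.prime_two).2 hp2)
      simpa [← sq] using h2.pow (m := 2) (n := 2)
    exact hpu (hsf _ (hcop.dvd_of_dvd_mul_left hdvd))

theorem IsFundamentalDiscriminant.two_adic_cases {Δ : ℤ} (hΔ : IsFundamentalDiscriminant Δ) :
    Δ ≡ 1 [ZMOD 8] ∨ Δ ≡ 5 [ZMOD 8] ∨ (∃ μ, Δ = 8 * μ ∧ ¬ 2 ∣ μ) ∨
      (∃ m, Δ = 4 * m ∧ m ≡ 3 [ZMOD 4]) := by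
  unfold Int.ModEq
  rcases hΔ with ⟨h4, -⟩ | ⟨m, rfl, -, hm | hm⟩
  · omega
  · exact Or.inr (Or.inr (Or.inl ⟨m / 2, by omega, by omega⟩))
  · exact Or.inr (Or.inr (Or.inr ⟨m, rfl, hm⟩))

theorem IsFundamentalDiscriminant.exists_sq_modEq_four {Δ : ℤ}
    (hΔ : IsFundamentalDiscriminant Δ) : ∃ B : ℤ, B ^ 2 ≡ Δ [ZMOD 4] := by
  unfold Int.ModEq
  rcases hΔ with ⟨h4, -⟩ | ⟨m, rfl, -⟩
  · exact ⟨1, by omega⟩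
  · exact ⟨0, by omega⟩

theorem IsFundamentalDiscriminant.exists_sq_modEq_sq_mul_two_pow_iff {c Δ : ℤ}
    (hΔ : IsFundamentalDiscriminant Δ) (hc : c ≠ 0) (k : ℕ) :
    (∃ B : ℤ, B ^ 2 ≡ c ^ 2 * Δ [ZMOD 2 ^ (k + 2)]) ↔
      (Δ ≡ 1 [ZMOD 8] ∨ (Δ ≡ 5 [ZMOD 8] ∧ k ≤ 2 * padicValInt 2 c) ∨
        ((2 : ℤ) ∣ Δ ∧ k ≤ 2 * padicValInt 2 c + 1)) := by
  obtain ⟨c', hcc', hc'⟩ := Int.exists_eq_pow_padicValInt_mul Nat.prime_two hc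
  push_cast at hcc' hc'
  set v := padicValInt 2 c
  clear_value v
  have hc'2 : ¬ (2 : ℤ) ∣ c' ^ 2 := mt Int.prime_two.dvd_of_dvd_pow hc'
  have hc'cop (j : ℕ) : IsCoprime c' (2 ^ j) :=
    (Int.prime_two.coprime_iff_not_dvd.2 hc').symm.pow_right
  rcases hΔ.two_adic_cases with h1 | h5 | ⟨μ, rfl, hμ⟩ | ⟨m, rfl, hm⟩
  · obtain ⟨y, hy⟩ := Int.exists_sq_modEq_two_pow_of_modEq_one h1 (k + 2)
    exact iff_of_true ⟨c * y, by rw [mul_pow]; exact hy.mul_left _⟩ (Or.inl h1)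
  · have hΔ2 : ¬ (2 : ℤ) ∣ Δ := by unfold Int.ModEq at h5; omega
    rw [show c ^ 2 * Δ = 2 ^ (2 * v) * (c' ^ 2 * Δ) by rw [hcc']; ring,
      Int.exists_sq_modEq_prime_pow_mul_iff Int.prime_two (Int.prime_two.not_dvd_mul hc'2 hΔ2),
      Int.exists_sq_modEq_sq_mul_iff (hc'cop _), Int.exists_sq_modEq_two_pow_iff hΔ2]
    unfold Int.ModEq at *
    simp only [even_two_mul, true_and]
    omega
  · rw [show c ^ 2 * (8 * μ) = 2 ^ (2 * v + 3) * (c' ^ 2 * μ) by rw [hcc']; ring,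
      Int.exists_sq_modEq_prime_pow_mul_iff Int.prime_two (Int.prime_two.not_dvd_mul hc'2 hμ)]
    have h2 : (2 : ℤ) ∣ 8 * μ := dvd_mul_of_dvd_left (by norm_num) μ
    unfold Int.ModEq
    simp [Nat.even_add_one, h2]
  · have hm2 : ¬ (2 : ℤ) ∣ m := by unfold Int.ModEq at hm; omega
    rw [show c ^ 2 * (4 * m) = 2 ^ (2 * v + 2) * (c' ^ 2 * m) by rw [hcc']; ring,
      Int.exists_sq_modEq_prime_pow_mul_iff Int.prime_two (Int.prime_two.not_dvd_mul hc'2 hm2),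
      Int.exists_sq_modEq_sq_mul_iff (hc'cop _), Int.exists_sq_modEq_two_pow_iff hm2]
    unfold Int.ModEq at *
    have h2 : (2 : ℤ) ∣ 4 * m := ⟨2 * m, by ring⟩
    have hev : Even (2 * v + 2) := ⟨v + 1, by ring⟩
    simp only [h2, hev, true_and]
    omega

theorem Nat.factorization_four_mul_apply_of_ne_two {N p : ℕ} (hN : N ≠ 0) (hp : p.Prime)
    (hp2 : p ≠ 2) : (4 * N).factorization p = padicValInt p N := by
  have h4 : ¬ p ∣ 4 := fun h =>
    hp2 ((Nat.prime_dvd_prime_iff_eq hp Nat.prime_two).1 (hp.dvd_of_dvd_pow (n := 2) h))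
  rw [Nat.factorization_mul (by norm_num) hN, Finsupp.add_apply,
    Nat.factorization_eq_zero_of_not_dvd h4, zero_add, padicValInt.of_nat,
    Nat.factorization_def _ hp]

theorem Nat.factorization_four_mul_apply_two {N : ℕ} (hN : N ≠ 0) :
    (4 * N).factorization 2 = padicValInt 2 N + 2 := by
  rw [Nat.factorization_mul (by norm_num) hN, Finsupp.add_apply, add_comm,
    show (4 : ℕ) = 2 ^ 2 by norm_num, Nat.prime_two.factorization_pow, Finsupp.single_eq_same,
    padicValInt.of_nat, Nat.factorization_def _ Nat.prime_two]

/-- `D = c²·Δ` admits a square root modulo `4N` if and only if for each prime `p`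
dividing `N` one of the three conditions of Lemma 2.1 holds. -/
theorem squareRoot_mod_4N_iff
    (Δ : ℤ) (hΔ : IsFundamentalDiscriminant Δ)
    (c N D : ℤ) (hc : 0 < c) (hN : 0 < N) (hD : D = c ^ 2 * Δ) :
    (∃ B : ℤ, B ^ 2 ≡ D [ZMOD 4 * N]) ↔
      ∀ p : ℕ, p.Prime → (p : ℤ) ∣ N →
        ((p ≠ 2 →
          ((¬ (p : ℤ) ∣ Δ ∧ ∃ x : ℤ, x ^ 2 ≡ Δ [ZMOD (p : ℤ)]) ∨
           ((¬ (p : ℤ) ∣ Δ ∧ ¬ ∃ x : ℤ, x ^ 2 ≡ Δ [ZMOD (p : ℤ)]) ∧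
             padicValInt p N ≤ 2 * padicValInt p c) ∨
           ((p : ℤ) ∣ Δ ∧ padicValInt p N ≤ 2 * padicValInt p c + 1))) ∧
         (p = 2 →
          (Δ ≡ 1 [ZMOD 8] ∨
           (Δ ≡ 5 [ZMOD 8] ∧ padicValInt 2 N ≤ 2 * padicValInt 2 c) ∨
           ((2 : ℤ) ∣ Δ ∧ padicValInt 2 N ≤ 2 * padicValInt 2 c + 1)))) := by
  subst hD
  lift N to ℕ using hN.le
  have hN0 : N ≠ 0 := by exact_mod_cast hN.ne'
  have local_odd (p : ℕ) (hp : p.Prime) (hp2 : p ≠ 2) :=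
    Int.exists_sq_modEq_sq_mul_prime_pow_iff hp hp2 hc.ne' (hΔ.not_prime_sq_dvd hp hp2)
  have local_two := hΔ.exists_sq_modEq_sq_mul_two_pow_iff hc.ne'
  rw [show (4 * N : ℤ) = ((4 * N : ℕ) : ℤ) by push_cast; rfl,
    Int.exists_sq_modEq_iff_forall_prime_pow (by omega)]
  constructor
  · intro h p hp _
    refine ⟨fun hp2 => ?_, ?_⟩
    · have := h p hp
      rw [Nat.factorization_four_mul_apply_of_ne_two hN0 hp hp2] at this
      exact (local_odd p hp hp2 _).1 this
    · rintro rfl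
      have := h 2 Nat.prime_two
      rw [Nat.factorization_four_mul_apply_two hN0] at this
      exact (local_two _).1 (by exact_mod_cast this)
  · intro h p hp
    rcases eq_or_ne p 2 with rfl | hp2
    · rw [Nat.factorization_four_mul_apply_two hN0]
      by_cases h2N : (2 : ℤ) ∣ N
      · exact_mod_cast (local_two _).2 ((h 2 Nat.prime_two h2N).2 rfl)
      · obtain ⟨B, hB⟩ := hΔ.exists_sq_modEq_four
        rw [padicValInt.eq_zero_of_not_dvd h2N]
        exact ⟨c * B, by rw [mul_pow]; exact_mod_cast hB.mul_left _⟩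
    · rw [Nat.factorization_four_mul_apply_of_ne_two hN0 hp hp2]
      by_cases hpN : (p : ℤ) ∣ N
      · exact (local_odd p hp hp2 _).2 ((h p hp hpN).1 hp2)
      · exact ⟨0, by simp [padicValInt.eq_zero_of_not_dvd hpN, Int.modEq_one]⟩
end

section
/- Assume the θ-setup and additionally that 3 divides N. (a) If 3 divides D and A·(C/N) ≡ 1 (mod 3), then 3 divides Θ and 3 divides B. (b) If D ≡ 1 (mod 3) and A·(C/N) ≡ 2 (mod 3), then 3 divides Θ and 3 does not divide B. -/
/-- The odd part of an integer: for `n ≠ 0`, `n = 2 ^ (padicValInt 2 n) * oddPart n`. -/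
def oddPart (n : ℤ) : ℤ := n / 2 ^ (padicValInt 2 n)

/-!
Write `C = N·p·k` and `u = p·a`. Cancelling `p` in `p = u·u' + v²·A·C` gives
`a·u' + v²·A·N·k = 1`, so modulo `3 ∣ N` the residue `u'` is a unit, `u'² ≡ 1`, and
`Θ ≡ -v·u'·(k - A)`. Also `D ≡ B²` and `A·(C/N) = A·p·k`. In case (a) `B ≡ 0`, so `p·a² ≡ 1`
forces `p ≡ 1` and then `A·k ≡ 1`, i.e. `k ≡ A`. In case (b) either `p ≡ 1`, and then `a·v·B ≡ 0`
forces `v ≡ 0`, or `p ≡ -1`, and then again `A·k ≡ 1`.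
-/

theorem mul_dvd_of_prime_of_not_dvd {R : Type*} [EuclideanDomain R] {p N C : R} (hp : Prime p)
    (hpN : ¬ p ∣ N) (hNC : N ∣ C) (hpC : p ∣ C) : N * p ∣ C :=
  ((hp.coprime_iff_not_dvd).2 hpN).symm.mul_dvd hNC hpC

namespace ZMod

theorem sq_eq_one_of_ne_zero_three {x : ZMod 3} (hx : x ≠ 0) : x ^ 2 = 1 :=
  pow_card_sub_one_eq_one hx

theorem eq_of_mul_eq_one_three {x y : ZMod 3} (h : x * y = 1) : y = x := by
  have hx : x ^ 2 = 1 := sq_eq_one_of_ne_zero_three (left_ne_zero_of_mul_eq_one h)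
  linear_combination x * h - y * hx

end ZMod

namespace ThetaSetup

open ZMod

variable {A B v p a k u' : ZMod 3}

theorem theta_mod_three_eq_zero (hu' : a * u' = 1) (h : v = 0 ∨ k = A) :
    -v * (u' * k + A * (a * (1 - u' ^ 2) - u')) = 0 := by
  have hsq : u' ^ 2 = 1 := sq_eq_one_of_ne_zero_three (right_ne_zero_of_mul_eq_one hu')
  rcases h with rfl | rfl
  · ring
  · linear_combination v * k * a * hsq

theorem case_a_mod_three (hB : B ^ 2 = 0) (hApk : A * (p * k) = 1)
    (hkey : a * (p * a - v * B) = 1) : k = A ∧ B = 0 := by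
  obtain rfl : B = 0 := pow_eq_zero_iff two_ne_zero |>.1 hB
  have ha : a ^ 2 = 1 := sq_eq_one_of_ne_zero_three (left_ne_zero_of_mul_eq_one hkey)
  obtain rfl : p = 1 := by linear_combination hkey - p * ha
  exact ⟨eq_of_mul_eq_one_three (by linear_combination hApk), rfl⟩

theorem case_b_mod_three (hB : B ^ 2 = 1) (hApk : A * (p * k) = 2)
    (hkey : a * (p * a - v * B) = 1) : (v = 0 ∨ k = A) ∧ B ≠ 0 := by
  have hB0 : B ≠ 0 := by rintro rfl; exact absurd hB (by decide)
  have hp0 : p ≠ 0 := by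
    rintro rfl
    rw [zero_mul, mul_zero] at hApk
    exact absurd hApk (by decide)
  refine ⟨?_, hB0⟩
  rcases sq_eq_one_iff.1 (sq_eq_one_of_ne_zero_three hp0) with rfl | rfl
  · have ha0 : a ≠ 0 := left_ne_zero_of_mul_eq_one hkey
    have hvB : a * v * B = 0 := by
      linear_combination sq_eq_one_of_ne_zero_three ha0 - hkey
    left
    simpa [ha0, hB0] using hvB
  · have h3 : (3 : ZMod 3) = 0 := by decide
    exact Or.inr (eq_of_mul_eq_one_three (by linear_combination -hApk - h3))

theorem cases_mod_three (hkey : a * (p * a - v * B) = 1) :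
    (B ^ 2 = 0 ∧ A * (p * k) = 1 →
      -v * ((p * a - v * B) * k + A * (a * (1 - (p * a - v * B) ^ 2) - (p * a - v * B))) = 0 ∧
        B = 0) ∧
    (B ^ 2 = 1 ∧ A * (p * k) = 2 →
      -v * ((p * a - v * B) * k + A * (a * (1 - (p * a - v * B) ^ 2) - (p * a - v * B))) = 0 ∧
        B ≠ 0) := by
  constructor
  · rintro ⟨hB, hApk⟩
    obtain ⟨hkA, hB0⟩ := case_a_mod_three hB hApk hkey
    exact ⟨theta_mod_three_eq_zero hkey (Or.inr hkA), hB0⟩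
  · rintro ⟨hB, hApk⟩
    obtain ⟨hvk, hB0⟩ := case_b_mod_three hB hApk hkey
    exact ⟨theta_mod_three_eq_zero hkey hvk, hB0⟩

end ThetaSetup

theorem prop30_general
    (N A B C u v p D Θ : ℤ)
    (hN : 2 ≤ N)
    (hp : Prime p) (hp6 : ¬ p ∣ 6 * N)
    (hNC : N ∣ C) (hpC : p ∣ C) (hpu : p ∣ u)
    (hpeq : p = u * (u - v * B) + v ^ 2 * A * C)
    (hD : D = B ^ 2 - 4 * A * C)
    (hΘ : Θ = (N - 1) * v * ((u - v * B) * (C / (N * p)) +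
      A * ((u / p) * (1 - (u - v * B) ^ 2) - (u - v * B))))
    (h3N : 3 ∣ N) :
    ((3 ∣ D ∧ A * (C / N) ≡ 1 [ZMOD 3]) → 3 ∣ Θ ∧ 3 ∣ B) ∧
    ((D ≡ 1 [ZMOD 3] ∧ A * (C / N) ≡ 2 [ZMOD 3]) → 3 ∣ Θ ∧ ¬ 3 ∣ B) := by
  have hN0 : N ≠ 0 := by omega
  have hp0 : p ≠ 0 := hp.ne_zero
  obtain ⟨k, rfl⟩ : N * p ∣ C :=
    mul_dvd_of_prime_of_not_dvd hp (fun h => hp6 (h.mul_left 6)) hNC hpC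
  obtain ⟨a, rfl⟩ := hpu
  have hkey : a * (p * a - v * B) + N * (v ^ 2 * A * k) = 1 :=
    mul_left_cancel₀ hp0 (by linear_combination -hpeq)
  rw [Int.mul_ediv_cancel_left _ (mul_ne_zero hN0 hp0), Int.mul_ediv_cancel_left _ hp0] at hΘ
  subst hD hΘ
  rw [mul_assoc N p k, Int.mul_ediv_cancel_left _ hN0]
  have hN3 : (N : ZMod 3) = 0 := (ZMod.intCast_zmod_eq_zero_iff_dvd N 3).2 h3N
  have hkey3 : (a : ZMod 3) * (p * a - v * B) = 1 := by
    simpa [hN3] using congrArg (Int.cast : ℤ → ZMod 3) hkey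
  have hdvd (x : ℤ) : 3 ∣ x ↔ (x : ZMod 3) = 0 := by
    simpa using (ZMod.intCast_zmod_eq_zero_iff_dvd x 3).symm
  have hmod (x y : ℤ) : x ≡ y [ZMOD 3] ↔ (x : ZMod 3) = y := (ZMod.intCast_eq_intCast_iff x y 3).symm
  simp only [hdvd, hmod]
  push_cast
  simp only [hN3, zero_mul, mul_zero, sub_zero, zero_sub, neg_one_mul]
  exact ThetaSetup.cases_mod_three hkey3

/-- PROP30: in the θ-setup with `3 ∣ N`:
(a) if `3 ∣ D` and `A·(C/N) ≡ 1 (mod 3)` then `3 ∣ Θ` and `3 ∣ B`;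
(b) if `D ≡ 1 (mod 3)` and `A·(C/N) ≡ 2 (mod 3)` then `3 ∣ Θ` and `3 ∤ B`. -/
theorem prop30
    (N A B C u v p D Θ : ℤ)
    (hN : 2 ≤ N) (hA : Int.gcd A N = 1) (hv : v ≠ 0)
    (hp : Prime p) (hp6 : ¬ p ∣ 6 * N)
    (hNC : N ∣ C) (hpC : p ∣ C) (hpu : p ∣ u)
    (hpeq : p = u * (u - v * B) + v ^ 2 * A * C)
    (hD : D = B ^ 2 - 4 * A * C)
    (hΘ : Θ = (N - 1) * v * ((u - v * B) * (C / (N * p)) +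
      A * ((u / p) * (1 - (u - v * B) ^ 2) - (u - v * B))))
    (h3N : 3 ∣ N) :
    ((3 ∣ D ∧ A * (C / N) ≡ 1 [ZMOD 3]) → 3 ∣ Θ ∧ 3 ∣ B) ∧
    ((D ≡ 1 [ZMOD 3] ∧ A * (C / N) ≡ 2 [ZMOD 3]) → 3 ∣ Θ ∧ ¬ 3 ∣ B) :=
  prop30_general N A B C u v p D Θ hN hp hp6 hNC hpC hpu hpeq hD hΘ h3N
end

section
/- Assume the θ-setup and additionally that N ≡ 2 (mod 3). Let r ∈ {1, 2} be such that A·(C/N) ≡ r (mod 3). If D ≡ r (mod 3), then 3 divides Θ and 3 divides B. -/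
set_option maxRecDepth 10000 in
lemma key32 : ∀ (a b c m w q r : ZMod 3), q ≠ 0 → (r = 1 ∨ r = 2) →
    q = q*m*(q*m - w*b) + w^2*a*(2*(q*c)) →
    a*(q*c) = r →
    b^2 - 4*(a*(2*(q*c))) = r →
    w*((q*m - w*b)*c + a*(m*(1 - (q*m - w*b)^2) - (q*m - w*b))) = 0 ∧ b = 0 := by
  decide

/-- PROP32: in the θ-setup with `N ≡ 2 (mod 3)`, if `r ∈ {1, 2}`, `A·(C/N) ≡ r (mod 3)`
and `D ≡ r (mod 3)`, then `3 ∣ Θ` and `3 ∣ B`. -/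
theorem prop32
    (N A B C u v p D Θ : ℤ)
    (hN : 2 ≤ N) (hA : Int.gcd A N = 1) (hv : v ≠ 0)
    (hp : Prime p) (hp6 : ¬ p ∣ 6 * N)
    (hNC : N ∣ C) (hpC : p ∣ C) (hpu : p ∣ u)
    (hpeq : p = u * (u - v * B) + v ^ 2 * A * C)
    (hD : D = B ^ 2 - 4 * A * C)
    (hΘ : Θ = (N - 1) * v * ((u - v * B) * (C / (N * p)) +
      A * ((u / p) * (1 - (u - v * B) ^ 2) - (u - v * B))))
    (hN3 : N ≡ 2 [ZMOD 3])
    (r : ℤ) (hr : r = 1 ∨ r = 2)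
    (hAC : A * (C / N) ≡ r [ZMOD 3])
    (hDr : D ≡ r [ZMOD 3]) :
    3 ∣ Θ ∧ 3 ∣ B := by
  have hp0 : p ≠ 0 := hp.ne_zero
  have hN0 : N ≠ 0 := by omega
  have hpN : ¬ p ∣ N := fun h => hp6 (h.mul_left 6)
  obtain ⟨c1, hc1⟩ := hNC
  have hpc1 : p ∣ c1 := ((hp.dvd_mul.mp (hc1 ▸ hpC)).resolve_left hpN)
  obtain ⟨k, hk⟩ := hpc1
  have hC : C = N * p * k := by rw [hc1, hk]; ring
  obtain ⟨m, hm⟩ := hpu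
  have hdiv1 : C / (N * p) = k := by
    rw [hC]; exact Int.mul_ediv_cancel_left _ (mul_ne_zero hN0 hp0)
  have hdiv2 : C / N = p * k := by
    rw [hC, mul_assoc]; exact Int.mul_ediv_cancel_left _ hN0
  have hdiv3 : u / p = m := by rw [hm]; exact Int.mul_ediv_cancel_left _ hp0
  -- p is not divisible by 3
  have h3p : ((p : ZMod 3)) ≠ 0 := by
    rw [Ne, ZMod.intCast_zmod_eq_zero_iff_dvd]
    intro h
    exact hp6 (dvd_trans ((Int.prime_three.associated_of_dvd hp (by exact_mod_cast h)).symm.dvd)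
      ⟨2 * N, by ring⟩)
  have hN2 : ((N : ZMod 3)) = 2 := by
    exact_mod_cast (ZMod.intCast_eq_intCast_iff' N 2 3).mpr hN3
  have hr' : ((r : ZMod 3)) = 1 ∨ ((r : ZMod 3)) = 2 := by
    rcases hr with h | h <;> [left; right] <;> rw [h] <;> norm_num
  -- hypothesis 1 : the prime equation
  have h1 : ((p : ZMod 3)) = (p : ZMod 3) * m * ((p : ZMod 3) * m - v * B)
      + (v : ZMod 3) ^ 2 * A * (2 * ((p : ZMod 3) * k)) := by
    have : p = (p * m) * (p * m - v * B) + v ^ 2 * A * (N * (p * k)) := by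
      nth_rewrite 1 [hpeq]; rw [hC, hm]; ring
    have := congrArg (fun x : ℤ => (x : ZMod 3)) this
    push_cast at this
    rw [hN2] at this
    linear_combination this
  -- hypothesis 2 : A * (C/N) ≡ r
  have h2 : ((A : ZMod 3)) * ((p : ZMod 3) * k) = r := by
    rw [hdiv2] at hAC
    have := (ZMod.intCast_eq_intCast_iff' (A * (p * k)) r 3).mpr hAC
    push_cast at this
    linear_combination this
  -- hypothesis 3 : D ≡ r
  have h3 : ((B : ZMod 3)) ^ 2 - 4 * ((A : ZMod 3) * (2 * ((p : ZMod 3) * k))) = r := by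
    rw [hD, hC] at hDr
    have := (ZMod.intCast_eq_intCast_iff' (B ^ 2 - 4 * A * (N * p * k)) r 3).mpr hDr
    push_cast at this
    rw [hN2] at this
    linear_combination this
  obtain ⟨hkey1, hkey2⟩ := key32 (A : ZMod 3) (B : ZMod 3) (k : ZMod 3) (m : ZMod 3)
    (v : ZMod 3) (p : ZMod 3) (r : ZMod 3) h3p hr' h1 h2 h3
  constructor
  · rw [show (3 : ℤ) = ((3 : ℕ) : ℤ) by norm_num, ← ZMod.intCast_zmod_eq_zero_iff_dvd Θ 3]
    rw [hdiv1, hdiv3, hm] at hΘ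
    have := congrArg (fun x : ℤ => (x : ZMod 3)) hΘ
    push_cast at this
    rw [hN2] at this
    rw [this]
    linear_combination hkey1
  · rw [show (3 : ℤ) = ((3 : ℕ) : ℤ) by norm_num, ← ZMod.intCast_zmod_eq_zero_iff_dvd B 3]
    exact hkey2
end

section
/- Assume the θ-setup and additionally that N is odd and D is odd. Define the integer ρ = v·(u'·(C/(N·p)) + A·((u/p)·(1 − u'²) − u')) + 3·v₁·A₁·(u'−1). Then ρ is even. -/
theorem oddPart_odd {n : ℤ} (hn : n ≠ 0) : Odd (oddPart n) := by
  set k := padicValInt 2 n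
  have hfac : 2 ^ k * oddPart n = n :=
    Int.mul_ediv_cancel' (by exact_mod_cast padicValInt_dvd (p := 2) n)
  rw [← Int.not_even_iff_odd, even_iff_two_dvd]
  rintro ⟨m, hm⟩
  have : ((2 : ℕ) : ℤ) ^ (k + 1) ∣ n := ⟨m, by rw [← hfac, hm]; push_cast; ring⟩
  rcases (padicValInt_dvd_iff _ _).mp this with h | h
  · exact hn h
  · omega

theorem intCast_oddPart_zmod_two {n : ℤ} (hn : (n : ZMod 2) ≠ 0) : (oddPart n : ZMod 2) = 1 :=
  (oddPart_odd (by rintro rfl; simp at hn)).intCast_zmod_two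

theorem Int.odd_of_prime_of_not_dvd_two {p : ℤ} (hp : Prime p) (h2 : ¬ p ∣ 2) : Odd p := by
  rw [← Int.not_even_iff_odd, even_iff_two_dvd]
  exact fun h => h2 (Int.prime_two.irreducible.associated_of_dvd hp.irreducible h).symm.dvd

theorem Int.odd_of_odd_discrim {a b c : ℤ} (h : Odd (discrim a b c)) : Odd b := by
  have hb : b ^ 2 = discrim a b c + 2 * (2 * a * c) := by rw [discrim]; ring
  exact (Int.odd_pow' two_ne_zero).mp (hb ▸ h.add_even (even_two_mul _))

theorem ZMod.eq_zero_or_eq_one (x : ZMod 2) : x = 0 ∨ x = 1 := by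
  revert x; decide

theorem rho_zmod_two_eq_zero {q v A N c v₁ A₁ : ZMod 2}
    (hv₁ : v ≠ 0 → v₁ = 1) (hA₁ : A ≠ 0 → A₁ = 1)
    (hpeq : 1 = q * (q - v) + v ^ 2 * A * (N * c)) :
    v * ((q - v) * c + A * (q * (1 - (q - v) ^ 2) - (q - v))) + 3 * v₁ * A₁ * ((q - v) - 1) = 0 := by
  rcases v.eq_zero_or_eq_one with rfl | rfl
  · obtain rfl : q = 1 := by
      rcases q.eq_zero_or_eq_one with rfl | rfl
      · simp at hpeq
      · rfl
    simp
  · obtain rfl : v₁ = 1 := hv₁ one_ne_zero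
    have hq : q * (q - 1) = 0 := by rcases q.eq_zero_or_eq_one with rfl | rfl <;> decide
    have hANc : A * (N * c) = 1 := by linear_combination -hpeq - hq
    obtain rfl : A = 1 := by
      rcases A.eq_zero_or_eq_one with rfl | rfl
      · simp at hANc
      · rfl
    obtain rfl : c = 1 := by
      rcases c.eq_zero_or_eq_one with rfl | rfl
      · simp at hANc
      · rfl
    obtain rfl : A₁ = 1 := hA₁ one_ne_zero
    rcases q.eq_zero_or_eq_one with rfl | rfl <;> decide

theorem prop21_general
    (N A B C u v p D ρ : ℤ)
    (hp : Prime p) (hp6 : ¬ p ∣ 6 * N)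
    (hNC : N ∣ C) (hpC : p ∣ C) (hpu : p ∣ u)
    (hpeq : p = u * (u - v * B) + v ^ 2 * A * C)
    (hD : D = B ^ 2 - 4 * A * C)
    (hDodd : Odd D)
    (hρ : ρ = v * ((u - v * B) * (C / (N * p)) +
      A * ((u / p) * (1 - (u - v * B) ^ 2) - (u - v * B))) +
      3 * oddPart v * oddPart A * ((u - v * B) - 1)) :
    Even ρ := by
  have hp2 : (p : ZMod 2) = 1 := by
    refine (Int.odd_of_prime_of_not_dvd_two hp fun h => hp6 ?_).intCast_zmod_two
    exact h.trans ⟨3 * N, by ring⟩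
  have hB2 : (B : ZMod 2) = 1 :=
    (Int.odd_of_odd_discrim (a := A) (c := C) (by rw [discrim, ← hD]; exact hDodd)).intCast_zmod_two
  have hNpC : N * p ∣ C :=
    ((Prime.coprime_iff_not_dvd hp).mpr fun h => hp6 (h.mul_left 6)).symm.mul_dvd hNC hpC
  have hu : u = p * (u / p) := (Int.mul_ediv_cancel' hpu).symm
  have hC : C = N * p * (C / (N * p)) := (Int.mul_ediv_cancel' hNpC).symm
  generalize u / p = q at hu hρ
  generalize C / (N * p) = c at hC hρ
  subst hu hC hρ
  replace hpeq := congrArg (Int.cast : ℤ → ZMod 2) hpeq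
  rw [← ZMod.intCast_eq_zero_iff_even]
  push_cast at hpeq ⊢
  simp only [hp2, hB2, one_mul, mul_one] at hpeq ⊢
  exact rho_zmod_two_eq_zero intCast_oddPart_zmod_two intCast_oddPart_zmod_two hpeq

/-- PROP21: in the θ-setup with `N` odd and `D` odd, the integer
`ρ = v·(u'·(C/(N·p)) + A·((u/p)·(1 − u'²) − u')) + 3·v₁·A₁·(u'−1)` is even. -/
theorem prop21
    (N A B C u v p D ρ : ℤ)
    (hN : 2 ≤ N) (hA : Int.gcd A N = 1) (hv : v ≠ 0)
    (hp : Prime p) (hp6 : ¬ p ∣ 6 * N)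
    (hNC : N ∣ C) (hpC : p ∣ C) (hpu : p ∣ u)
    (hpeq : p = u * (u - v * B) + v ^ 2 * A * C)
    (hD : D = B ^ 2 - 4 * A * C)
    (hNodd : Odd N) (hDodd : Odd D)
    (hρ : ρ = v * ((u - v * B) * (C / (N * p)) +
      A * ((u / p) * (1 - (u - v * B) ^ 2) - (u - v * B))) +
      3 * oddPart v * oddPart A * ((u - v * B) - 1)) :
    Even ρ :=
  prop21_general N A B C u v p D ρ hp hp6 hNC hpC hpu hpeq hD hDodd hρ
end

section
/- Assume the θ-setup and additionally that N is even. Then 4 divides T in each of the following cases: (a) B² ≡ D + 4N (mod 8N); (b) B² ≡ D (mod 8N) and D ≡ 1 (mod 8). -/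
theorem Int.odd_of_prime_of_not_dvd_two_mul {p n : ℤ} (hp : Prime p) (hpn : ¬ p ∣ 2 * n) :
    Odd p := by
  refine Int.not_even_iff_odd.mp fun h => hpn ?_
  exact ((Int.prime_two.associated_of_dvd hp h.two_dvd).dvd').mul_right n

theorem Int.odd_of_gcd_eq_one_of_even {a n : ℤ} (h : Int.gcd a n = 1) (hn : Even n) :
    Odd a := by
  refine Int.not_even_iff_odd.mp fun ha => ?_
  have := Int.dvd_gcd ha.two_dvd hn.two_dvd
  rw [h] at this
  norm_num at this

theorem four_dvd_of_even_of_odd {Θ a l w : ℤ} (hΘ : Even Θ) (hw : Odd w) :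
    4 ∣ 2 * Θ + 6 * a * (w - 1) + 3 * l * (w ^ 2 - 1) := by
  obtain ⟨s, rfl⟩ := hΘ
  obtain ⟨t, rfl⟩ := hw
  exact ⟨s + 3 * a * t + 3 * l * (t ^ 2 + t), by ring⟩

theorem odd_of_modEq_sub_four_mul_add {A B N c : ℤ} (hN : N ≠ 0)
    (h : B ^ 2 ≡ B ^ 2 - 4 * A * (N * c) + 4 * N [ZMOD 8 * N]) : Odd (A * c) := by
  obtain ⟨t, ht⟩ := h.dvd
  have : N * (4 - 4 * (A * c) - 8 * t) = 0 := by linear_combination ht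
  exact ⟨-t, by linarith [(mul_eq_zero.mp this).resolve_left hN]⟩

theorem odd_of_sub_four_mul_modEq_one {A B C : ℤ} (h : B ^ 2 - 4 * A * C ≡ 1 [ZMOD 8]) :
    Odd B := by
  obtain ⟨r, hr⟩ := h.dvd
  have hB2 : Odd (B ^ 2) := ⟨2 * A * C - 4 * r, by linarith⟩
  exact (Int.odd_pow' two_ne_zero).mp hB2

theorem even_add_mul_sub_of_odd {u k A m : ℤ} (hu : Odd u) (hk : Odd k) (hA : Odd A) :
    Even (u * k + A * (m * (1 - u ^ 2) - u)) :=
  (hu.mul hk).add_odd (hA.mul (((odd_one.sub_odd hu.pow).mul_left m).sub_odd hu))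

theorem prop20_general
    (N A B C u v p D Θ T : ℤ)
    (hN : 2 ≤ N) (hA : Int.gcd A N = 1)
    (hp : Prime p) (hp6 : ¬ p ∣ 6 * N)
    (hNC : N ∣ C) (hpC : p ∣ C) (hpu : p ∣ u)
    (hpeq : p = u * (u - v * B) + v ^ 2 * A * C)
    (hD : D = B ^ 2 - 4 * A * C)
    (hΘ : Θ = (N - 1) * v * ((u - v * B) * (C / (N * p)) +
      A * ((u / p) * (1 - (u - v * B) ^ 2) - (u - v * B))))
    (hT : T = 2 * Θ + 6 * oddPart v * oddPart A * (oddPart N - 1) * ((u - v * B) - 1) +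
      3 * (padicValInt 2 N : ℤ) * ((u - v * B) ^ 2 - 1))
    (hNeven : Even N) :
    (B ^ 2 ≡ D + 4 * N [ZMOD 8 * N] → 4 ∣ T) ∧
    ((B ^ 2 ≡ D [ZMOD 8 * N] ∧ D ≡ 1 [ZMOD 8]) → 4 ∣ T) := by
  subst hD
  have hN0 : N ≠ 0 := by omega
  have hpodd : Odd p := Int.odd_of_prime_of_not_dvd_two_mul (n := 3 * N) hp (by rwa [← mul_assoc])
  have hCeven : Even C := even_iff_two_dvd.mpr (hNeven.two_dvd.trans hNC)
  obtain ⟨hu, hu'⟩ : Odd u ∧ Odd (u - v * B) := Int.odd_mul.mp <| by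
    rw [show u * (u - v * B) = p - v ^ 2 * A * C by rw [hpeq]; ring]
    exact hpodd.sub_even (hCeven.mul_left _)
  have hNp : IsCoprime N p :=
    ((hp.coprime_iff_not_dvd).mpr fun h => hp6 (h.mul_left 6)).symm
  obtain ⟨k, rfl⟩ := hNp.mul_dvd hNC hpC
  obtain ⟨m, rfl⟩ := hpu
  rw [Int.mul_ediv_cancel_left k (mul_ne_zero hN0 hp.ne_zero),
    Int.mul_ediv_cancel_left m hp.ne_zero] at hΘ
  have key : Even Θ → 4 ∣ T := fun h => by
    rw [hT]
    convert four_dvd_of_even_of_odd (a := oddPart v * oddPart A * (oddPart N - 1)) h hu' using 2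
    ring
  refine ⟨fun h => key ?_, fun ⟨_, hD1⟩ => key ?_⟩
  · rw [mul_assoc N] at h
    obtain ⟨-, -, hk⟩ : Odd A ∧ Odd p ∧ Odd k := by
      simpa only [Int.odd_mul] using odd_of_modEq_sub_four_mul_add hN0 h
    exact hΘ ▸ (even_add_mul_sub_of_odd hu' hk
      (Int.odd_of_gcd_eq_one_of_even hA hNeven)).mul_left _
  · have hvB : Even (v * B) := by simpa only [sub_sub_cancel] using hu.sub_odd hu'
    have hv : Even v := (Int.even_mul.mp hvB).resolve_right
      (Int.not_even_iff_odd.mpr (odd_of_sub_four_mul_modEq_one hD1))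
    exact hΘ ▸ ((hv.mul_left _).mul_right _)

/-- PROP20: in the θ-setup with `N` even, `4 ∣ T` in each of the following cases:
(a) `B² ≡ D + 4N (mod 8N)`; (b) `B² ≡ D (mod 8N)` and `D ≡ 1 (mod 8)`. -/
theorem prop20
    (N A B C u v p D Θ T : ℤ)
    (hN : 2 ≤ N) (hA : Int.gcd A N = 1) (hv : v ≠ 0)
    (hp : Prime p) (hp6 : ¬ p ∣ 6 * N)
    (hNC : N ∣ C) (hpC : p ∣ C) (hpu : p ∣ u)
    (hpeq : p = u * (u - v * B) + v ^ 2 * A * C)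
    (hD : D = B ^ 2 - 4 * A * C)
    (hΘ : Θ = (N - 1) * v * ((u - v * B) * (C / (N * p)) +
      A * ((u / p) * (1 - (u - v * B) ^ 2) - (u - v * B))))
    (hT : T = 2 * Θ + 6 * oddPart v * oddPart A * (oddPart N - 1) * ((u - v * B) - 1) +
      3 * (padicValInt 2 N : ℤ) * ((u - v * B) ^ 2 - 1))
    (hNeven : Even N) :
    (B ^ 2 ≡ D + 4 * N [ZMOD 8 * N] → 4 ∣ T) ∧
    ((B ^ 2 ≡ D [ZMOD 8 * N] ∧ D ≡ 1 [ZMOD 8]) → 4 ∣ T) :=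
  prop20_general N A B C u v p D Θ T hN hA hp hp6 hNC hpC hpu hpeq hD hΘ hT hNeven
end

section
/- Assume the θ-setup and additionally that N is even and B² ≡ D + 4N (mod 16N). If one of the following conditions is met: (a) D ≡ 1 (mod 8); (b) 16 ∣ D; (c) the 2-adic valuation of N equals 1 and the 2-adic valuation of D equals 2; then 8 divides T. -/
lemma oddPart_not_two_dvd (n : ℤ) (hn : n ≠ 0) : ¬ (2:ℤ) ∣ oddPart n := by
  haveI : Fact (Nat.Prime 2) := ⟨Nat.prime_two⟩
  have hop0 : oddPart n = n / 2 ^ (padicValInt 2 n) := rfl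
  set k := padicValInt 2 n with hk
  have hd : (2:ℤ) ^ k ∣ n := by
    have := padicValInt_dvd (p := 2) n
    simpa [← hk] using this
  obtain ⟨m, hm⟩ := hd
  have hop : oddPart n = m := by
    rw [hop0, hm, Int.mul_ediv_cancel_left _ (by positivity)]
  rw [hop]
  rintro ⟨t, ht⟩
  have h2 : ((2:ℕ):ℤ) ^ (k + 1) ∣ n := ⟨t, by push_cast; rw [hm, ht]; ring⟩
  rcases (padicValInt_dvd_iff (p := 2) (k + 1) n).mp h2 with h | h
  · exact hn h
  · omega

/-- PROP44: in the θ-setup with `N` even and `B² ≡ D + 4N (mod 16N)`, if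
(a) `D ≡ 1 (mod 8)`, or (b) `16 ∣ D`, or (c) `v₂(N) = 1` and `v₂(D) = 2`,
then `8 ∣ T`. -/
theorem prop44
    (N A B C u v p D Θ T : ℤ)
    (hN : 2 ≤ N) (hA : Int.gcd A N = 1) (hv : v ≠ 0)
    (hp : Prime p) (hp6 : ¬ p ∣ 6 * N)
    (hNC : N ∣ C) (hpC : p ∣ C) (hpu : p ∣ u)
    (hpeq : p = u * (u - v * B) + v ^ 2 * A * C)
    (hD : D = B ^ 2 - 4 * A * C)
    (hΘ : Θ = (N - 1) * v * ((u - v * B) * (C / (N * p)) +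
      A * ((u / p) * (1 - (u - v * B) ^ 2) - (u - v * B))))
    (hT : T = 2 * Θ + 6 * oddPart v * oddPart A * (oddPart N - 1) * ((u - v * B) - 1) +
      3 * (padicValInt 2 N : ℤ) * ((u - v * B) ^ 2 - 1))
    (hNeven : Even N)
    (hB : B ^ 2 ≡ D + 4 * N [ZMOD 16 * N])
    (hcond : D ≡ 1 [ZMOD 8] ∨ (16 : ℤ) ∣ D ∨
      (padicValInt 2 N = 1 ∧ padicValInt 2 D = 2)) :
    8 ∣ T := by
  haveI : Fact (Nat.Prime 2) := ⟨Nat.prime_two⟩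
  have hN0 : N ≠ 0 := by omega
  have hp0 : p ≠ 0 := hp.ne_zero
  obtain ⟨n2, hn2⟩ := hNeven    -- N = n2 + n2
  -- p is odd
  have hpodd : ¬ (2:ℤ) ∣ p := by
    intro h2p
    exact hp6 (dvd_trans (Int.prime_two.irreducible.dvd_symm hp.irreducible h2p)
      ⟨3 * N, by ring⟩)
  -- A is odd
  have hAodd : ¬ (2:ℤ) ∣ A := by
    intro h2A
    obtain ⟨x, y, hxy⟩ := Int.isCoprime_iff_gcd_eq_one.mpr hA
    obtain ⟨a, ha⟩ := h2A
    have : (2:ℤ) ∣ 1 := ⟨x * a + y * n2, by rw [← hxy, ha, hn2]; ring⟩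
    norm_num at this
  -- decompose C = N * p * k, u = p * m
  obtain ⟨c0, hc0⟩ := hNC
  have hpc0 : p ∣ c0 := by
    rcases hp.dvd_mul.mp (hc0 ▸ hpC) with h | h
    · exact absurd (h.mul_left 6) hp6
    · exact h
  obtain ⟨k, hk⟩ := hpc0
  have hc' : C = N * p * k := by rw [hc0, hk]; ring
  obtain ⟨m, hm⟩ := hpu
  -- rewrite Θ
  have hCdiv : C / (N * p) = k := by rw [hc', Int.mul_ediv_cancel_left _ (mul_ne_zero hN0 hp0)]
  have hudiv : u / p = m := by rw [hm, Int.mul_ediv_cancel_left _ hp0]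
  rw [hCdiv, hudiv] at hΘ
  -- C is even
  have h2C : (2:ℤ) ∣ C := ⟨n2 * p * k, by rw [hc', hn2]; ring⟩
  obtain ⟨c2, hc2⟩ := h2C
  -- u and w := u - v*B are odd
  have huodd : ¬ (2:ℤ) ∣ u := by
    rintro ⟨s, hs⟩
    exact hpodd ⟨s * (u - v * B) + v ^ 2 * A * c2, by rw [hpeq, hs, hc2]; ring⟩
  have hwodd : ¬ (2:ℤ) ∣ (u - v * B) := by
    rintro ⟨s, hs⟩
    exact hpodd ⟨u * s + v ^ 2 * A * c2, by rw [hpeq, hs, hc2]; ring⟩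
  obtain ⟨su, hsu⟩ : ∃ s, u = 2 * s + 1 := ⟨(u - 1) / 2, by omega⟩
  obtain ⟨sw, hsw⟩ : ∃ s, u - v * B = 2 * s + 1 := ⟨(u - v * B - 1) / 2, by omega⟩
  -- 8 ∣ w^2 - 1
  obtain ⟨e, he0⟩ := Int.even_mul_succ_self sw
  have hew : (u - v * B) ^ 2 - 1 = 8 * e := by rw [hsw]; linear_combination 4 * he0
  -- third term
  have h3 : (8:ℤ) ∣ 3 * (padicValInt 2 N : ℤ) * ((u - v * B) ^ 2 - 1) :=
    ⟨3 * (padicValInt 2 N : ℤ) * e, by rw [hew]; ring⟩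
  -- second term : oddPart N is odd
  have hNop := oddPart_not_two_dvd N hN0
  obtain ⟨a1, ha1⟩ : ∃ a, oddPart N = 2 * a + 1 := ⟨(oddPart N - 1) / 2, by omega⟩
  have h2 : (8:ℤ) ∣ 6 * oddPart v * oddPart A * (oddPart N - 1) * ((u - v * B) - 1) :=
    ⟨3 * oddPart v * oddPart A * a1 * sw, by rw [ha1, hsw]; ring⟩
  -- key congruence 4 ∣ A*p*k - 1 from hB
  have h16 : 16 * N ∣ N * (4 - 4 * (A * p * k)) := by
    have := hB.dvd
    have heq : (D + 4 * N) - B ^ 2 = N * (4 - 4 * (A * p * k)) := by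
      rw [hD, hc']; ring
    rwa [heq] at this
  have h16' : (16:ℤ) ∣ 4 - 4 * (A * p * k) := by
    have : N * 16 ∣ N * (4 - 4 * (A * p * k)) := by
      rwa [show N * 16 = 16 * N by ring]
    exact (mul_dvd_mul_iff_left hN0).mp this
  have hApk : (4:ℤ) ∣ A * p * k - 1 := by
    obtain ⟨t, ht⟩ := h16'
    exact ⟨-t, by linarith⟩
  obtain ⟨h1w, hh1⟩ := hApk   -- A*p*k - 1 = 4 * h1w
  -- 4 ∣ p*k - A
  obtain ⟨al, hal⟩ : ∃ a, A = 2 * a + 1 := ⟨(A - 1) / 2, by omega⟩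
  have hpkA : (4:ℤ) ∣ p * k - A :=
    ⟨A * h1w - (al ^ 2 + al) * p * k, by
      linear_combination A * hh1 - p * k * (A + 2 * al + 1) * hal⟩
  -- 4 ∣ A*C - N
  have hac : A * C - N = 4 * (N * h1w) := by rw [hc']; linear_combination N * hh1
  -- main case split on parity of v
  have hvk : (4:ℤ) ∣ v * k * (p - 1) := by
    by_cases h2v : (2:ℤ) ∣ v
    · obtain ⟨t, ht⟩ := h2v
      obtain ⟨q, hq⟩ : ∃ q, p = 2 * q + 1 := ⟨(p - 1) / 2, by omega⟩
      exact ⟨t * k * q, by rw [ht, hq]; ring⟩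
    · -- v odd : show 4 ∣ p - 1
      obtain ⟨sv, hsv⟩ : ∃ s, v = 2 * s + 1 := ⟨(v - 1) / 2, by omega⟩
      -- B is even
      have hvB : (2:ℤ) ∣ v * B := ⟨su - sw, by linear_combination hsu - hsw⟩
      have hBeven : (2:ℤ) ∣ B := (Int.prime_two.dvd_mul.mp hvB).resolve_left h2v
      obtain ⟨b, hb⟩ := hBeven   -- B = 2 * b
      have hp1 : (4:ℤ) ∣ p - 1 := by
        have key : ∀ hNb : (4:ℤ) ∣ N - 2 * u * v * b, (4:ℤ) ∣ p - 1 := by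
          intro hNb
          have hsplit : p - 1 = 4 * (su ^ 2 + su) + 4 * ((sv ^ 2 + sv) * (A * C)) +
              (A * C - N) + (N - 2 * u * v * b) := by
            linear_combination hpeq + (u + 2 * su + 1) * hsu +
              (A * C) * (v + 2 * sv + 1) * hsv - u * v * hb
          rw [hsplit]
          exact dvd_add (dvd_add (dvd_add ⟨su ^ 2 + su, rfl⟩ ⟨(sv ^ 2 + sv) * (A * C), rfl⟩)
            ⟨N * h1w, hac⟩) hNb
        rcases hcond with hDa | hDb | ⟨hc1, hc2c⟩
        · -- case (a): contradiction
          exfalso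
          have h4D : (4:ℤ) ∣ D := ⟨b ^ 2 - A * C, by rw [hD, hb]; ring⟩
          obtain ⟨x, hx⟩ := h4D
          obtain ⟨y, hy⟩ := hDa.dvd
          omega
        · -- case (b)
          obtain ⟨x, hx⟩ := hDb
          have hbac : b ^ 2 - A * C = 4 * x := by
            have h4 : (4:ℤ) * (b ^ 2 - A * C - 4 * x) = 0 := by
              linear_combination hx - hD - (B + 2 * b) * hb
            linarith
          rcases Int.even_or_odd b with ⟨c, hbc⟩ | ⟨c, hbc⟩
          · -- b even : 4 ∣ N and 4 ∣ 2uvb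
            apply key
            have h4N : (4:ℤ) ∣ N :=
              ⟨c ^ 2 - x - N * h1w, by linear_combination -hbac - hac + (b + c + c) * hbc⟩
            obtain ⟨z, hz⟩ := h4N
            exact ⟨z - u * v * c, by rw [hz, hbc]; ring⟩
          · -- b odd : contradiction with N even
            exfalso
            have : (2:ℤ) ∣ 1 :=
              ⟨2 * x + 2 * (N * h1w) + n2 - 2 * c ^ 2 - 2 * c, by
                linear_combination hbac + hac + hn2 - (b + 2 * c + 1) * hbc⟩
            norm_num at this
        · -- case (c)
          -- D ≠ 0
          have hD0 : D ≠ 0 := by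
            intro h; rw [h] at hc2c; simp [padicValInt] at hc2c
          have h4D : (4:ℤ) ∣ D := by
            have := padicValInt_dvd (p := 2) D
            rw [hc2c] at this
            exact_mod_cast (by push_cast at this ⊢; exact this : (2:ℤ)^2 ∣ D) -- may fix
          have h8D : ¬ (8:ℤ) ∣ D := by
            intro h8
            have h8' : ((2:ℕ):ℤ) ^ 3 ∣ D := by push_cast; exact (by norm_num : (2:ℤ)^3 = 8) ▸ h8
            rcases (padicValInt_dvd_iff (p := 2) 3 D).mp h8' with h | h
            · exact hD0 h
            · omega
          have h4N : ¬ (4:ℤ) ∣ N := by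
            intro h4
            have h4' : ((2:ℕ):ℤ) ^ 2 ∣ N := by push_cast; exact (by norm_num : (2:ℤ)^2 = 4) ▸ h4
            rcases (padicValInt_dvd_iff (p := 2) 2 N).mp h4' with h | h
            · exact hN0 h
            · omega
          obtain ⟨n, hn⟩ : ∃ n, N = 4 * n + 2 := ⟨(N - 2) / 4, by omega⟩
          -- b must be odd
          rcases Int.even_or_odd b with ⟨c, hbc⟩ | ⟨c, hbc⟩
          · exfalso
            exact h8D ⟨2 * c ^ 2 - 2 * (N * h1w) - 2 * n - 1, by
              rw [hD]
              linear_combination (B + 2 * b) * hb + 4 * (b + c + c) * hbc - 4 * hac - 4 * hn⟩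
          · apply key
            exact ⟨n - (4 * su * sv * c + 2 * su * sv + 2 * su * c + 2 * sv * c + su + sv + c),
              by rw [hn, hsu, hsv, hbc]; ring⟩
      exact (hp1.mul_left (v * k))
  -- 4 ∣ v * (k - A)
  have hvkA : (4:ℤ) ∣ v * (k - A) := by
    have heq : v * (k - A) = v * (p * k - A) - v * k * (p - 1) := by ring
    rw [heq]
    exact dvd_sub (hpkA.mul_left v) hvk
  -- 4 ∣ Θ
  obtain ⟨g, hg⟩ := hvkA
  have hΘ4 : (4:ℤ) ∣ Θ :=
    ⟨(N - 1) * (u - v * B) * g - 2 * (N - 1) * v * A * m * e, by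
      linear_combination hΘ + (N - 1) * (u - v * B) * hg - (N - 1) * v * A * m * hew⟩
  obtain ⟨g2, hg2⟩ := hΘ4
  rw [hT]
  exact dvd_add (dvd_add ⟨g2, by rw [hg2]; ring⟩ h2) h3
end

section
/- Assume the θ-setup and additionally that N is even, N is a perfect square, r ∈ {1, 3, 5, 7}, and B² ≡ D + 4·r·N (mod 32·N). Then 16 divides T if one of the following holds: (a) r = 3 or r = 7, and D ≡ 1 (mod 8); (b) r = 1 and 32 ∣ D; (c) r = 5 and the 2-adic valuation of D equals 4. Moreover, in case (b) the 2-adic valuation of B equals 2 if the 2-adic valuation of N equals 2, and 8 ∣ B if 16 ∣ N; in case (c) the 2-adic valuation of B equals 2 if 16 ∣ N, and 8 ∣ B if the 2-adic valuation of N equals 2. -/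
set_option maxRecDepth 100000

lemma padicValInt_two_pow (v : ℕ) : padicValInt 2 ((2:ℤ)^v) = v := by
  unfold padicValInt
  rw [show ((2:ℤ)^v).natAbs = 2^v by simp [Int.natAbs_pow], padicValNat.prime_pow]

lemma padicValInt_two_pow_mul (v : ℕ) (w : ℤ) (hw : ¬ (2:ℤ) ∣ w) (hw0 : w ≠ 0) :
    padicValInt 2 ((2:ℤ)^v * w) = v := by
  rw [padicValInt.mul (by positivity) hw0, padicValInt_two_pow,
    padicValInt.eq_zero_of_not_dvd (by exact_mod_cast hw)]
  ring

lemma oddPart_eq (v : ℕ) (w : ℤ) (hw : ¬ (2:ℤ) ∣ w) (hw0 : w ≠ 0) :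
    oddPart ((2:ℤ)^v * w) = w := by
  rw [oddPart, padicValInt_two_pow_mul v w hw hw0, Int.mul_ediv_cancel_left _ (by positivity)]

lemma decomp (n : ℤ) (hn : n ≠ 0) :
    n = 2^(padicValInt 2 n) * oddPart n ∧ ¬ (2:ℤ) ∣ oddPart n := by
  obtain ⟨w, hw⟩ : (2:ℤ)^(padicValInt 2 n) ∣ n := by exact_mod_cast padicValInt_dvd (p := 2) n
  have hw0 : w ≠ 0 := by rintro rfl; rw [mul_zero] at hw; exact hn hw
  have hwodd : ¬ (2:ℤ) ∣ w := by
    rintro ⟨t, rfl⟩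
    have ht0 : t ≠ 0 := by rintro rfl; simp at hw0
    have hh : n = 2^(padicValInt 2 n + 1) * t := hw.trans (by ring)
    have h2 := padicValInt.mul (p := 2) (a := (2:ℤ)^(padicValInt 2 n + 1)) (b := t)
      (by positivity) ht0
    rw [← hh, padicValInt_two_pow] at h2
    omega
  have he : oddPart n = w := by rw [hw, oddPart_eq _ _ hwodd hw0]
  exact ⟨by rw [← he] at hw; exact hw, he ▸ hwodd⟩

lemma sq1 : ∀ t : ZMod 8, (2*t+1)^2 = 1 := by decide

lemma kA3_0 : ∀ k m v b : ZMod 8, (2*m+1 = (2*k+1)*((2*k+1) - v*(2*b+1))) →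
    v * (3*(2*m+1) - 1) = 0 := by decide
lemma kA3_4 : ∀ k m v b : ZMod 8, (2*m+1 = (2*k+1)*((2*k+1) - v*(2*b+1)) + 4*3*v^2) →
    v * (3*(2*m+1) - 1) = 0 := by decide
lemma kA7_0 : ∀ k m v b : ZMod 8, (2*m+1 = (2*k+1)*((2*k+1) - v*(2*b+1))) →
    v * (7*(2*m+1) - 1) = 0 := by decide
lemma kA7_4 : ∀ k m v b : ZMod 8, (2*m+1 = (2*k+1)*((2*k+1) - v*(2*b+1)) + 4*7*v^2) →
    v * (7*(2*m+1) - 1) = 0 := by decide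
lemma kB1 : ∀ k m v b : ZMod 8, (2*m+1 = (2*k+1)*((2*k+1) - v*(8*b+4)) + 4*1*v^2) →
    v * (1*(2*m+1) - 1) = 0 := by decide
lemma kB2 : ∀ k m v b : ZMod 8, (2*m+1 = (2*k+1)*((2*k+1) - v*(8*b))) →
    v * (1*(2*m+1) - 1) = 0 := by decide
lemma kC1 : ∀ k m v b : ZMod 8, (2*m+1 = (2*k+1)*((2*k+1) - v*(8*b+4))) →
    v * (5*(2*m+1) - 1) = 0 := by decide
lemma kC2 : ∀ k m v b : ZMod 8, (2*m+1 = (2*k+1)*((2*k+1) - v*(8*b)) + 4*5*v^2) →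
    v * (5*(2*m+1) - 1) = 0 := by decide

lemma z32_16 : ∀ x : ZMod 32, x^2 = 16 →
    ZMod.castHom (by norm_num : (8:ℕ)∣32) (ZMod 8) x = 4 := by decide
lemma z32_0 : ∀ x : ZMod 32, x^2 = 0 →
    ZMod.castHom (by norm_num : (8:ℕ)∣32) (ZMod 8) x = 0 := by decide
lemma z64_16d : ∀ x t : ZMod 64, x^2 = 16*(2*t+1) →
    ZMod.castHom (by norm_num : (8:ℕ)∣64) (ZMod 8) x = 4 := by decide

/-- extract `B = 8b + c` from `(B : ZMod 8) = c`. -/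
lemma lift8 (B : ℤ) (c : ℤ) (h : (B : ZMod 8) = (c : ZMod 8)) : ∃ b : ℤ, B = 8*b + c := by
  have h0 : ((B - c : ℤ) : ZMod 8) = 0 := by push_cast; rw [h]; ring
  obtain ⟨b, hb⟩ := (ZMod.intCast_zmod_eq_zero_iff_dvd _ 8).1 h0
  exact ⟨b, by push_cast at hb; omega⟩

lemma finish8 (A e p v rr : ZMod 8) (hA : A^2 = 1) (hp : p^2 = 1) (hre : A*(e*p) = rr)
    (hvp : v*(rr*p - 1) = 0) : v*(e - A) = 0 := by
  have he : e = rr*A*p := by linear_combination A*p*hre - e*p^2*hA - e*hp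
  rw [he]; linear_combination A*hvp

/-- PROP8: in the θ-setup with `N` an even perfect square, `r ∈ {1, 3, 5, 7}` and
`B² ≡ D + 4rN (mod 32N)`, then `16 ∣ T` if one of the following holds:
(a) `r = 3` or `r = 7`, and `D ≡ 1 (mod 8)`; (b) `r = 1` and `32 ∣ D`;
(c) `r = 5` and `v₂(D) = 4`. Moreover, in case (b), `v₂(B) = 2` if `v₂(N) = 2` and
`8 ∣ B` if `16 ∣ N`; in case (c), `v₂(B) = 2` if `16 ∣ N` and `8 ∣ B` if `v₂(N) = 2`. -/
theorem prop8
    (N A B C u v p D Θ T : ℤ)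
    (hN : 2 ≤ N) (hA : Int.gcd A N = 1) (hv : v ≠ 0)
    (hp : Prime p) (hp6 : ¬ p ∣ 6 * N)
    (hNC : N ∣ C) (hpC : p ∣ C) (hpu : p ∣ u)
    (hpeq : p = u * (u - v * B) + v ^ 2 * A * C)
    (hD : D = B ^ 2 - 4 * A * C)
    (hΘ : Θ = (N - 1) * v * ((u - v * B) * (C / (N * p)) +
      A * ((u / p) * (1 - (u - v * B) ^ 2) - (u - v * B))))
    (hT : T = 2 * Θ + 6 * oddPart v * oddPart A * (oddPart N - 1) * ((u - v * B) - 1) +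
      3 * (padicValInt 2 N : ℤ) * ((u - v * B) ^ 2 - 1))
    (hNeven : Even N) (hNsq : IsSquare N)
    (r : ℤ) (hr : r = 1 ∨ r = 3 ∨ r = 5 ∨ r = 7)
    (hB : B ^ 2 ≡ D + 4 * r * N [ZMOD 32 * N])
    (hcond : ((r = 3 ∨ r = 7) ∧ D ≡ 1 [ZMOD 8]) ∨
      (r = 1 ∧ (32 : ℤ) ∣ D) ∨ (r = 5 ∧ padicValInt 2 D = 4)) :
    16 ∣ T ∧
    ((r = 1 ∧ (32 : ℤ) ∣ D) →
      (padicValInt 2 N = 2 → padicValInt 2 B = 2) ∧ ((16 : ℤ) ∣ N → 8 ∣ B)) ∧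
    ((r = 5 ∧ padicValInt 2 D = 4) →
      ((16 : ℤ) ∣ N → padicValInt 2 B = 2) ∧ (padicValInt 2 N = 2 → 8 ∣ B)) := by
  have hN0 : N ≠ 0 := by omega
  -- p is odd, coprime to N
  have hpN : ¬ p ∣ N := fun h => hp6 (Dvd.dvd.mul_left h 6)
  have hp2 : ¬ (2:ℤ) ∣ p := by
    rintro ⟨t, ht⟩
    rcases hp.irreducible.isUnit_or_isUnit ht with h | h
    · rw [Int.isUnit_iff] at h; omega
    · rw [Int.isUnit_iff] at h
      rcases h with h | h <;> exact hp6 ⟨t * 3 * N, by rw [ht, h]; ring⟩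
  -- A is odd
  have hAodd : ¬ (2:ℤ) ∣ A := by
    rintro hA2
    have h2N : (2:ℤ) ∣ N := hNeven.two_dvd
    have := Int.dvd_gcd hA2 h2N
    rw [hA] at this
    norm_num at this
  have hCeven : (2:ℤ) ∣ C := dvd_trans hNeven.two_dvd hNC
  -- witnesses for divisions
  obtain ⟨cn, hcn⟩ := hNC
  have hpcn : p ∣ cn := by
    rcases hp.dvd_or_dvd (show p ∣ N * cn from hcn ▸ hpC) with h | h
    · exact absurd h hpN
    · exact h
  obtain ⟨e, he⟩ := hpcn
  obtain ⟨q, hq⟩ := hpu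
  have hC : C = N * p * e := by rw [hcn, he]; ring
  have hdiv1 : C / (N * p) = e := by
    rw [hC]; exact Int.mul_ediv_cancel_left _ (mul_ne_zero hN0 hp.ne_zero)
  have hdiv2 : u / p = q := by rw [hq]; exact Int.mul_ediv_cancel_left _ hp.ne_zero
  rw [hdiv1, hdiv2] at hΘ
  -- parity of u and u' = u - v*B
  have h2vac : (2:ℤ) ∣ v ^ 2 * A * C := Dvd.dvd.mul_left hCeven _
  have huodd : ¬ (2:ℤ) ∣ u := by
    intro h
    exact hp2 (hpeq ▸ dvd_add (h.mul_right _) h2vac)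
  have hu'odd : ¬ (2:ℤ) ∣ (u - v * B) := by
    intro h
    exact hp2 (hpeq ▸ dvd_add (h.mul_left _) h2vac)
  obtain ⟨k, hk⟩ : ∃ k, u = 2*k+1 := ⟨(u-1)/2, by omega⟩
  obtain ⟨m, hm⟩ : ∃ m, p = 2*m+1 := ⟨(p-1)/2, by omega⟩
  obtain ⟨w, hw⟩ : ∃ w, u - v*B = 2*w+1 := ⟨(u-v*B-1)/2, by omega⟩
  -- decomposition of N
  obtain ⟨m0, hm0⟩ := hNsq
  have hm00 : m0 ≠ 0 := by rintro rfl; simp at hm0; omega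
  obtain ⟨hdm, hw0odd⟩ := decomp m0 hm00
  set a := padicValInt 2 m0 with ha_def
  set w0 := oddPart m0 with hw0_def
  have hw00 : w0 ≠ 0 := by rintro h; rw [h, mul_zero] at hdm; exact hm00 hdm
  have hN2 : N = 2^(2*a) * (w0 * w0) := by rw [hm0, hdm, two_mul, pow_add]; ring
  have hww_odd : ¬ (2:ℤ) ∣ w0 * w0 := by
    intro h
    rcases Int.prime_two.dvd_or_dvd h with h' | h' <;> exact hw0odd h'
  have hlam : padicValInt 2 N = 2*a := by
    rw [hN2]; exact padicValInt_two_pow_mul _ _ hww_odd (mul_ne_zero hw00 hw00)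
  have hoddN : oddPart N = w0 * w0 := by
    rw [hN2]; exact oddPart_eq _ _ hww_odd (mul_ne_zero hw00 hw00)
  obtain ⟨s, hs⟩ : ∃ s, w0 = 2*s+1 := ⟨(w0-1)/2, by omega⟩
  obtain ⟨s2, hs2⟩ : ∃ s2, s*(s+1) = s2 + s2 := (Int.even_mul_succ_self s)
  have hN1 : oddPart N = 8*s2 + 1 := by rw [hoddN, hs]; linear_combination 4*hs2
  have ha1 : 1 ≤ a := by
    by_contra h
    have ha0 : a = 0 := by omega
    rw [ha0] at hN2
    simp at hN2
    exact hww_odd (hN2 ▸ hNeven.two_dvd)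
  have hNval : N = 2^(2*a) * (8*s2+1) := by rw [hN2]; congr 1; omega
  -- the congruence hypothesis
  obtain ⟨g, hg⟩ := hB.dvd
  have hr8 : r - A * cn = 8 * g := by
    have h4 : 4*N*(r - A*cn) = 4*N*(8*g) := by
      linear_combination hg - hD + 4*A*hcn
    exact mul_left_cancel₀ (show (4*N:ℤ) ≠ 0 by intro h; apply hN0; omega) h4
  -- ZMod 8 ingredients
  have h88 : ((8:ℤ) : ZMod 8) = 0 := by decide
  have hA8 : (A : ZMod 8)^2 = 1 := by
    obtain ⟨al, hal⟩ : ∃ al, A = 2*al+1 := ⟨(A-1)/2, by omega⟩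
    have hAc : (A : ZMod 8) = 2*(al:ZMod 8)+1 := by rw [hal]; push_cast; ring
    rw [hAc]; exact sq1 _
  have hmc : (p : ZMod 8) = 2*(m:ZMod 8)+1 := by rw [hm]; push_cast; ring
  have hkc : (u : ZMod 8) = 2*(k:ZMod 8)+1 := by rw [hk]; push_cast; ring
  have hp8 : (p : ZMod 8)^2 = 1 := by rw [hmc]; exact sq1 _
  have hre : (A : ZMod 8) * ((e:ZMod 8) * (p:ZMod 8)) = ((r:ℤ) : ZMod 8) := by
    have hint : A * (p * e) = r - 8*g := by linear_combination -hr8 - A * he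
    have hc := congrArg (Int.cast : ℤ → ZMod 8) hint
    push_cast at hc
    rw [show (8:ZMod 8) = 0 by decide] at hc
    push_cast
    linear_combination hc
  have hpeqC : p = u*(u - v*B) + v^2*A*(N*(p*e)) := by linear_combination hpeq + v^2*A*hC
  have hpz := congrArg (Int.cast : ℤ → ZMod 8) hpeqC
  push_cast at hpz
  -- the common ending: from `v*(e-A) = 0 (mod 8)` conclude `16 ∣ T`
  have final : (v:ZMod 8) * ((e:ZMod 8) - (A:ZMod 8)) = 0 → 16 ∣ T := by
    intro hveA
    have hu'c : ((u : ZMod 8) - (v:ZMod 8)*(B:ZMod 8)) = 2*(w:ZMod 8)+1 := by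
      have hc := congrArg (Int.cast : ℤ → ZMod 8) hw; push_cast at hc; exact hc
    have hu'sq : ((u : ZMod 8) - (v:ZMod 8)*(B:ZMod 8))^2 = 1 := by rw [hu'c]; exact sq1 _
    have hΘ8 : (Θ : ZMod 8) = 0 := by
      have hc := congrArg (Int.cast : ℤ → ZMod 8) hΘ
      push_cast at hc
      rw [hc]
      linear_combination ((N:ZMod 8)-1)*((u:ZMod 8) - (v:ZMod 8)*(B:ZMod 8))*hveA
        - ((N:ZMod 8)-1)*(v:ZMod 8)*(A:ZMod 8)*(q:ZMod 8)*hu'sq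
    obtain ⟨th, hth⟩ := (ZMod.intCast_zmod_eq_zero_iff_dvd Θ 8).1 hΘ8
    obtain ⟨w2, hw2⟩ : ∃ w2, w*(w+1) = w2+w2 := Int.even_mul_succ_self w
    refine ⟨th + 6*oddPart v*oddPart A*s2*w + 3*(a:ℤ)*w2, ?_⟩
    have hlamz : (padicValInt 2 N : ℤ) = 2*(a:ℤ) := by exact_mod_cast hlam
    rw [hT, hth, hN1, hlamz, hw]
    linear_combination (24*(a:ℤ))*hw2
  -- a-case auxiliary
  have haux : (a = 1 ∧ N = 32*s2+4) ∨ (2 ≤ a ∧ (16:ℤ) ∣ N) := by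
    rcases Nat.lt_or_ge a 2 with h | h
    · exact Or.inl ⟨by omega, by rw [hNval, show a = 1 by omega]; ring⟩
    · obtain ⟨c, hc⟩ : ∃ c, 2*a = 4 + c := ⟨2*a - 4, by omega⟩
      exact Or.inr ⟨h, ⟨2^c*(8*s2+1), by rw [hNval, hc, pow_add]; ring⟩⟩
  have hNcast4 : N = 32*s2+4 → (N : ZMod 8) = 4 := by
    intro h
    have hc := congrArg (Int.cast : ℤ → ZMod 8) h
    push_cast at hc
    rw [hc, show (32 : ZMod 8) = 0 by decide]
    ring
  have hNcast0 : (16:ℤ) ∣ N → (N : ZMod 8) = 0 := by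
    rintro ⟨t, ht⟩
    exact (ZMod.intCast_zmod_eq_zero_iff_dvd N 8).2 ⟨2*t, by omega⟩
  rcases hcond with ⟨hra, hD1⟩ | ⟨hr1, hd32⟩ | ⟨hr5, hvD⟩
  · -- case (a): r ∈ {3,7}, D ≡ 1 (mod 8)
    obtain ⟨d1, hd1⟩ := hD1.dvd
    have hBodd : ¬ (2:ℤ) ∣ B := by
      rintro ⟨t, ht⟩
      obtain ⟨t2, ht2⟩ : (2:ℤ) ∣ D := ⟨2*t^2 - 2*A*C, by rw [hD, ht]; ring⟩
      omega
    obtain ⟨b, hb⟩ : ∃ b, B = 2*b+1 := ⟨(B-1)/2, by omega⟩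
    have hbc : (B : ZMod 8) = 2*(b:ZMod 8)+1 := by rw [hb]; push_cast; ring
    refine ⟨final ?_, fun hx => absurd hx.1 (by rcases hra with h|h <;> omega),
      fun hx => absurd hx.1 (by rcases hra with h|h <;> omega)⟩
    rw [hkc, hbc, hmc] at hpz
    rcases haux with ⟨ha1', hNv⟩ | ⟨ha2', h16N⟩
    · rw [hNcast4 hNv] at hpz
      rcases hra with rfl | rfl
      · have hre3 : (A:ZMod 8) * ((e:ZMod 8)*(p:ZMod 8)) = 3 := by push_cast at hre; exact hre
        have hre'' : (A:ZMod 8)*((e:ZMod 8)*(2*(m:ZMod 8)+1)) = 3 := by rw [← hmc]; exact hre3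
        have hvp := kA3_4 k m v b (by linear_combination hpz + 4*(v:ZMod 8)^2*hre'')
        exact finish8 (A:ZMod 8) (e:ZMod 8) (p:ZMod 8) (v:ZMod 8) 3 hA8 hp8 hre3
          (by rw [hmc]; exact hvp)
      · have hre3 : (A:ZMod 8) * ((e:ZMod 8)*(p:ZMod 8)) = 7 := by push_cast at hre; exact hre
        have hre'' : (A:ZMod 8)*((e:ZMod 8)*(2*(m:ZMod 8)+1)) = 7 := by rw [← hmc]; exact hre3
        have hvp := kA7_4 k m v b (by linear_combination hpz + 4*(v:ZMod 8)^2*hre'')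
        exact finish8 (A:ZMod 8) (e:ZMod 8) (p:ZMod 8) (v:ZMod 8) 7 hA8 hp8 hre3
          (by rw [hmc]; exact hvp)
    · rw [hNcast0 h16N] at hpz
      rcases hra with rfl | rfl
      · have hre3 : (A:ZMod 8) * ((e:ZMod 8)*(p:ZMod 8)) = 3 := by push_cast at hre; exact hre
        have hvp := kA3_0 k m v b (by linear_combination hpz)
        exact finish8 (A:ZMod 8) (e:ZMod 8) (p:ZMod 8) (v:ZMod 8) 3 hA8 hp8 hre3
          (by rw [hmc]; exact hvp)
      · have hre3 : (A:ZMod 8) * ((e:ZMod 8)*(p:ZMod 8)) = 7 := by push_cast at hre; exact hre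
        have hvp := kA7_0 k m v b (by linear_combination hpz)
        exact finish8 (A:ZMod 8) (e:ZMod 8) (p:ZMod 8) (v:ZMod 8) 7 hA8 hp8 hre3
          (by rw [hmc]; exact hvp)
  · -- case (b): r = 1, 32 ∣ D
    subst hr1
    obtain ⟨d0, hd0⟩ := hd32
    have hre1 : (A:ZMod 8) * ((e:ZMod 8)*(p:ZMod 8)) = 1 := by push_cast at hre; exact hre
    rcases haux with ⟨ha1', hNv⟩ | ⟨ha2', h16N⟩
    · -- v₂(N) = 2, so v₂(B) = 2
      have hsq : B^2 - 16 = 32*(d0 + 4*s2 - (32*s2+4)*g) := by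
        linear_combination -hg + hd0 + (4 - 32*g)*hNv
      have h32 : ((B : ZMod 32))^2 = 16 := by
        have hc := congrArg (Int.cast : ℤ → ZMod 32) hsq
        push_cast at hc
        rw [show (32:ZMod 32) = 0 by decide] at hc
        linear_combination hc
      have h8B : (B : ZMod 8) = 4 := by
        have hz := z32_16 _ h32; rwa [map_intCast] at hz
      obtain ⟨b, hb⟩ := lift8 B 4 (by rw [h8B]; norm_num)
      have hB2 : padicValInt 2 B = 2 := by
        rw [show B = 2^2*(2*b+1) by rw [hb]; ring]
        exact padicValInt_two_pow_mul 2 _ (by rintro ⟨t,ht⟩; omega) (by omega)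
      have h16F : ¬ (16:ℤ) ∣ N := by rw [hNv]; rintro ⟨t, ht⟩; omega
      refine ⟨final ?_, fun _ => ⟨fun _ => hB2, fun h => absurd h h16F⟩,
        fun hx => absurd hx.1 (by norm_num)⟩
      have hbc : (B:ZMod 8) = 8*(b:ZMod 8)+4 := by rw [hb]; push_cast; ring
      rw [hkc, hbc, hmc, hNcast4 hNv] at hpz
      have hre'' : (A:ZMod 8)*((e:ZMod 8)*(2*(m:ZMod 8)+1)) = 1 := by rw [← hmc]; exact hre1
      have hvp := kB1 k m v b (by linear_combination hpz + 4*(v:ZMod 8)^2*hre'')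
      exact finish8 (A:ZMod 8) (e:ZMod 8) (p:ZMod 8) (v:ZMod 8) 1 hA8 hp8 hre1
        (by rw [hmc]; exact hvp)
    · -- 16 ∣ N, so 8 ∣ B
      obtain ⟨n16, hn16⟩ := h16N
      have hsq : B^2 = 32*(d0 + 2*A*(n16*(p*e))) := by
        linear_combination -hD + hd0 + 4*A*hC + 4*A*p*e*hn16
      have h32 : ((B : ZMod 32))^2 = 0 := by
        have hc := congrArg (Int.cast : ℤ → ZMod 32) hsq
        push_cast at hc
        rw [show (32:ZMod 32) = 0 by decide] at hc
        linear_combination hc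
      have h8B : (B : ZMod 8) = 0 := by
        have hz := z32_0 _ h32; rwa [map_intCast] at hz
      obtain ⟨b, hb⟩ := lift8 B 0 (by rw [h8B]; norm_num)
      have h8dvd : (8:ℤ) ∣ B := ⟨b, by omega⟩
      refine ⟨final ?_, fun _ => ⟨fun h2 => by omega, fun _ => h8dvd⟩,
        fun hx => absurd hx.1 (by norm_num)⟩
      have hbc : (B:ZMod 8) = 8*(b:ZMod 8) := by rw [show B = 8*b by omega]; push_cast; ring
      rw [hkc, hbc, hmc, hNcast0 ⟨n16, hn16⟩] at hpz
      have hvp := kB2 k m v b (by linear_combination hpz)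
      exact finish8 (A:ZMod 8) (e:ZMod 8) (p:ZMod 8) (v:ZMod 8) 1 hA8 hp8 hre1
        (by rw [hmc]; exact hvp)
  · -- case (c): r = 5, v₂(D) = 4
    subst hr5
    have hD0 : D ≠ 0 := by rintro rfl; simp [padicValInt] at hvD
    obtain ⟨hdD, hDodd⟩ := decomp D hD0
    rw [hvD] at hdD
    obtain ⟨dl, hdl⟩ : ∃ dl, oddPart D = 2*dl+1 := ⟨(oddPart D - 1)/2, by omega⟩
    have hDval : D = 32*dl + 16 := by rw [hdD, hdl]; ring
    have hre5 : (A:ZMod 8) * ((e:ZMod 8)*(p:ZMod 8)) = 5 := by push_cast at hre; exact hre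
    rcases haux with ⟨ha1', hNv⟩ | ⟨ha2', h16N⟩
    · -- v₂(N) = 2, so 8 ∣ B
      have hsq : B^2 = 32*(dl + 3 + 20*s2 - (32*s2+4)*g) := by
        linear_combination -hg + hDval + (20 - 32*g)*hNv
      have h32 : ((B : ZMod 32))^2 = 0 := by
        have hc := congrArg (Int.cast : ℤ → ZMod 32) hsq
        push_cast at hc
        rw [show (32:ZMod 32) = 0 by decide] at hc
        linear_combination hc
      have h8B : (B : ZMod 8) = 0 := by
        have hz := z32_0 _ h32; rwa [map_intCast] at hz
      obtain ⟨b, hb⟩ := lift8 B 0 (by rw [h8B]; norm_num)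
      have h8dvd : (8:ℤ) ∣ B := ⟨b, by omega⟩
      have h16F : ¬ (16:ℤ) ∣ N := by rw [hNv]; rintro ⟨t, ht⟩; omega
      refine ⟨final ?_, fun hx => absurd hx.1 (by norm_num),
        fun _ => ⟨fun h => absurd h h16F, fun _ => h8dvd⟩⟩
      have hbc : (B:ZMod 8) = 8*(b:ZMod 8) := by rw [show B = 8*b by omega]; push_cast; ring
      rw [hkc, hbc, hmc, hNcast4 hNv] at hpz
      have hre'' : (A:ZMod 8)*((e:ZMod 8)*(2*(m:ZMod 8)+1)) = 5 := by rw [← hmc]; exact hre5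
      have hvp := kC2 k m v b (by linear_combination hpz + 4*(v:ZMod 8)^2*hre'')
      exact finish8 (A:ZMod 8) (e:ZMod 8) (p:ZMod 8) (v:ZMod 8) 5 hA8 hp8 hre5
        (by rw [hmc]; exact hvp)
    · -- 16 ∣ N, so v₂(B) = 2
      obtain ⟨n16, hn16⟩ := h16N
      have hsq : B^2 = 16*(2*dl+1) + 64*(A*(n16*(p*e))) := by
        linear_combination -hD + hDval + 4*A*hC + 4*A*p*e*hn16
      have h64 : ((B : ZMod 64))^2 = 16*(2*(dl : ZMod 64)+1) := by
        have hc := congrArg (Int.cast : ℤ → ZMod 64) hsq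
        push_cast at hc
        rw [show (64:ZMod 64) = 0 by decide] at hc
        linear_combination hc
      have h8B : (B : ZMod 8) = 4 := by
        have hz := z64_16d _ _ h64; rwa [map_intCast] at hz
      obtain ⟨b, hb⟩ := lift8 B 4 (by rw [h8B]; norm_num)
      have hB2 : padicValInt 2 B = 2 := by
        rw [show B = 2^2*(2*b+1) by rw [hb]; ring]
        exact padicValInt_two_pow_mul 2 _ (by rintro ⟨t,ht⟩; omega) (by omega)
      refine ⟨final ?_, fun hx => absurd hx.1 (by norm_num),
        fun _ => ⟨fun _ => hB2, fun h2 => by omega⟩⟩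
      have hbc : (B:ZMod 8) = 8*(b:ZMod 8)+4 := by rw [hb]; push_cast; ring
      rw [hkc, hbc, hmc, hNcast0 ⟨n16, hn16⟩] at hpz
      have hvp := kC1 k m v b (by linear_combination hpz)
      exact finish8 (A:ZMod 8) (e:ZMod 8) (p:ZMod 8) (v:ZMod 8) 5 hA8 hp8 hre5
        (by rw [hmc]; exact hvp)
end

section
/- Let N ≥ 2 be an integer and Γ⁰(N) = {γ ∈ SL₂(ℤ) : N divides the upper-right entry of γ}. For each integer k with 1 < k < N and gcd(k, N) > 1, let μ(k) be the least positive integer m such that gcd(m·k − 1, N) = 1. Then the following matrices form a complete set of representatives of the right cosets Γ⁰(N)\SL₂(ℤ), i.e., every M ∈ SL₂(ℤ) lies in Γ⁰(N)·R for exactly one matrix R in the list: T^ν = [[1, ν], [0, 1]] for 0 ≤ ν < N; S = [[0, −1], [1, 0]]; and M_{k,k'} = [[k, k·k' − 1], [1, k']] for each integer k with 1 < k < N and gcd(k, N) > 1 and each integer k' with 0 ≤ k' < μ(k). -/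
/-- `μ(k)`: the least positive integer `m` such that `gcd(m·k − 1, N) = 1`. -/
noncomputable def mu (N k : ℤ) : ℕ :=
  sInf {m : ℕ | 0 < m ∧ Int.gcd ((m : ℤ) * k - 1) N = 1}

/-- The translation matrix `T^ν = [[1, ν], [0, 1]]`. -/
def Tmat (ν : ℤ) : Matrix.SpecialLinearGroup (Fin 2) ℤ :=
  ⟨!![1, ν; 0, 1], by simp [Matrix.det_fin_two_of]⟩

/-- The inversion matrix `S = [[0, −1], [1, 0]]`. -/
def Smat : Matrix.SpecialLinearGroup (Fin 2) ℤ :=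
  ⟨!![0, -1; 1, 0], by simp [Matrix.det_fin_two_of]⟩

/-- The matrix `M_{k,k'} = [[k, k·k' − 1], [1, k']]`. -/
def Mmat (k k' : ℤ) : Matrix.SpecialLinearGroup (Fin 2) ℤ :=
  ⟨!![k, k * k' - 1; 1, k'], by rw [Matrix.det_fin_two_of]; ring⟩

/-- Oesterlé's list of representatives of `Γ⁰(N)\SL₂(ℤ)`. -/
noncomputable def reps (N : ℤ) : Set (Matrix.SpecialLinearGroup (Fin 2) ℤ) :=
  {R | (∃ ν : ℤ, 0 ≤ ν ∧ ν < N ∧ R = Tmat ν) ∨ R = Smat ∨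
    (∃ k k' : ℤ, 1 < k ∧ k < N ∧ 1 < Int.gcd k N ∧ 0 ≤ k' ∧ k' < (mu N k : ℤ) ∧
      R = Mmat k k')}

/-
The coset `Γ⁰(N) M` only depends on the top row `(a, b)` of `M`: `M ∈ Γ⁰(N) R` iff
`N ∣ a R₀₁ - b R₀₀`, i.e. iff the two primitive rows agree up to a unit modulo `N`.
Two invariants of this relation separate the representatives: `gcd(a, N)`, which is `1` for `T^ν`,
`N` for `S` and strictly in between for `M_{k,k'}`; and the set of shifts `K ≥ 0` with
`gcd(aK - b, N) = 1`, whose least element for the row `(k, kk' - 1)` is `k'` exactly when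
`k' < μ(k)`. For existence in the last family take that least `K` for `(a, b)` and
`k ≡ a (aK - b)⁻¹ mod N`.
-/

open scoped MatrixGroups

theorem Int.gcd_eq_of_dvd_sub_mul {N u x y : ℤ} (hu : IsCoprime u N) (h : N ∣ y - u * x) :
    Int.gcd y N = Int.gcd x N := by
  obtain ⟨t, ht⟩ := h
  rw [show y = u * x + t * N by linarith, Int.gcd_add_mul_right_left,
    Int.gcd_eq_natAbs_gcd_natAbs, Int.natAbs_mul,
    Nat.Coprime.gcd_mul_left_cancel _ (Int.isCoprime_iff_gcd_eq_one.mp hu)]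
  rfl

theorem Int.eq_of_dvd_sub {N x y : ℤ} (h : N ∣ x - y) (hx : 0 ≤ x) (hxN : x < N)
    (hy : 0 ≤ y) (hyN : y < N) : x = y :=
  sub_eq_zero.mp (Int.eq_zero_of_abs_lt_dvd h (abs_sub_lt_iff.mpr ⟨by omega, by omega⟩))

theorem Int.exists_isCoprime_dvd_sub {N g c : ℤ} (hN : N ≠ 0) (hg : g ∣ N)
    (hc : IsCoprime c g) : ∃ u, IsCoprime u N ∧ g ∣ u - c := by
  have : NeZero N.natAbs := ⟨by omega⟩
  obtain ⟨U, hU⟩ := ZMod.unitsMap_surjective (Int.natAbs_dvd_natAbs.mpr hg)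
    (ZMod.unitOfIsCoprime c (by simpa using hc.abs_right))
  refine ⟨(U : ZMod N.natAbs).cast, ?_, ?_⟩
  · have := (ZMod.coe_int_isUnit_iff_isCoprime _ N.natAbs).mp
      (by rw [ZMod.intCast_zmod_cast]; exact U.isUnit)
    simpa [IsCoprime.abs_right_iff] using this.symm
  · rw [← Int.natAbs_dvd, ← ZMod.intCast_eq_intCast_iff_dvd_sub, ZMod.intCast_cast]
    have := congrArg Units.val hU
    rw [ZMod.unitsMap_val, ZMod.coe_unitOfIsCoprime] at this
    exact this.symm

theorem exists_gammaUpper0_mul_eq_iff (N : ℤ) (M R : SL(2, ℤ)) :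
    (∃ γ : SL(2, ℤ), N ∣ γ 0 1 ∧ M = γ * R) ↔ N ∣ M 0 0 * R 0 1 - M 0 1 * R 0 0 := by
  have h01 : (M * R⁻¹) 0 1 = -(M 0 0 * R 0 1 - M 0 1 * R 0 0) := by
    simp only [Matrix.SpecialLinearGroup.coe_mul, Matrix.SpecialLinearGroup.coe_inv,
      Matrix.adjugate_fin_two, Matrix.mul_apply, Fin.sum_univ_two, Matrix.of_apply,
      Matrix.cons_val', Matrix.cons_val_zero, Matrix.cons_val_one, Matrix.cons_val_fin_one]
    ring
  simp only [eq_comm (a := M), ← eq_mul_inv_iff_mul_eq, exists_eq_right, h01, dvd_neg]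

section Rows

variable {N a b a' b' : ℤ}

theorem exists_isCoprime_of_dvd_mul_sub_mul (hab : IsCoprime a b) (hab' : IsCoprime a' b')
    (h : N ∣ a * b' - b * a') :
    ∃ u, IsCoprime u N ∧ N ∣ a' - u * a ∧ N ∣ b' - u * b := by
  obtain ⟨p, q, hpq⟩ := hab
  obtain ⟨p', q', hpq'⟩ := hab'
  obtain ⟨t, ht⟩ := h
  set u := p * a' + q * b'
  have ha : N ∣ a' - u * a := ⟨-q * t, by linear_combination (-a') * hpq - q * ht⟩
  have hb : N ∣ b' - u * b := ⟨p * t, by linear_combination (-b') * hpq + p * ht⟩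
  obtain ⟨s, hs⟩ := dvd_add (ha.mul_left p') (hb.mul_left q')
  exact ⟨u, ⟨p' * a + q' * b, s, by linear_combination hpq' - hs⟩, ha, hb⟩

theorem dvd_mul_sub_mul_of_isCoprime {x y x' y' : ℤ} (hab : IsCoprime a b)
    (h : N ∣ a * y - b * x) (h' : N ∣ a * y' - b * x') : N ∣ x * y' - y * x' := by
  obtain ⟨p, q, hpq⟩ := hab
  obtain ⟨s, hs⟩ := h
  obtain ⟨s', hs'⟩ := h'
  exact ⟨p * (x * s' - x' * s) + q * (y * s' - y' * s), by
    linear_combination (y * x' - x * y') * hpq + (p * x + q * y) * hs' - (p * x' + q * y') * hs⟩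

def coprimeShifts (N a b : ℤ) : Set ℕ := {K | Int.gcd (a * K - b) N = 1}

theorem mem_coprimeShifts {K : ℕ} : K ∈ coprimeShifts N a b ↔ Int.gcd (a * K - b) N = 1 :=
  Iff.rfl

theorem gcd_eq_of_dvd_mul_sub_mul (hab : IsCoprime a b) (hab' : IsCoprime a' b')
    (h : N ∣ a * b' - b * a') : Int.gcd a' N = Int.gcd a N := by
  obtain ⟨u, hu, ha, -⟩ := exists_isCoprime_of_dvd_mul_sub_mul hab hab' h
  exact Int.gcd_eq_of_dvd_sub_mul hu ha

theorem coprimeShifts_eq_of_dvd_mul_sub_mul (hab : IsCoprime a b) (hab' : IsCoprime a' b')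
    (h : N ∣ a * b' - b * a') : coprimeShifts N a' b' = coprimeShifts N a b := by
  obtain ⟨u, hu, ha, hb⟩ := exists_isCoprime_of_dvd_mul_sub_mul hab hab' h
  ext K
  have hK : N ∣ (a' * K - b') - u * (a * K - b) := by
    rw [show a' * K - b' - u * (a * K - b) = (a' - u * a) * K - (b' - u * b) by ring]
    exact dvd_sub (ha.mul_right _) hb
  rw [mem_coprimeShifts, mem_coprimeShifts, Int.gcd_eq_of_dvd_sub_mul hu hK]

theorem coprimeShifts_nonempty (hN : N ≠ 0) (hab : IsCoprime a b) :
    (coprimeShifts N a b).Nonempty := by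
  have hbg : IsCoprime (-b) (Int.gcd a N) :=
    (hab.symm.of_isCoprime_of_dvd_right (Int.gcd_dvd_left a N)).neg_left
  obtain ⟨u, hu, e, he⟩ := Int.exists_isCoprime_dvd_sub hN (Int.gcd_dvd_right a N) hbg
  set K₀ := Int.gcdA a N * e
  obtain ⟨t, ht⟩ := (Int.mod_modEq K₀ N).dvd
  refine ⟨(K₀ % N).toNat, ?_⟩
  have hK : N ∣ (a * (K₀ % N).toNat - b) - 1 * u :=
    ⟨-Int.gcdB a N * e - a * t, by
      rw [Int.toNat_of_nonneg (Int.emod_nonneg K₀ hN)]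
      linear_combination -e * Int.gcd_eq_gcd_ab a N - he - a * ht⟩
  rw [mem_coprimeShifts, Int.gcd_eq_of_dvd_sub_mul isCoprime_one_left hK,
    ← Int.isCoprime_iff_gcd_eq_one]
  exact hu

end Rows

theorem mu_spec {N : ℤ} (hN : 0 < N) (k : ℤ) :
    0 < mu N k ∧ Int.gcd ((mu N k : ℤ) * k - 1) N = 1 := by
  have hN' : 0 < N.toNat ∧ Int.gcd ((N.toNat : ℤ) * k - 1) N = 1 := by
    refine ⟨by omega, ?_⟩
    rw [Int.toNat_of_nonneg hN.le, show N * k - 1 = -1 + N * k by ring,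
      Int.gcd_add_mul_left_left]
    simp
  exact Nat.sInf_mem (s := {m : ℕ | 0 < m ∧ Int.gcd ((m : ℤ) * k - 1) N = 1}) ⟨_, hN'⟩

theorem mu_le {N k : ℤ} {m : ℕ} (hm : 0 < m) (h : Int.gcd ((m : ℤ) * k - 1) N = 1) :
    mu N k ≤ m :=
  Nat.sInf_le ⟨hm, h⟩

theorem isLeast_coprimeShifts_iff_lt_mu {N : ℤ} (hN : 0 < N) (k : ℤ) (K : ℕ) :
    IsLeast (coprimeShifts N k (k * K - 1)) K ↔ K < mu N k := by
  have hshift (m : ℕ) (hm : m ≤ K) :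
      K - m ∈ coprimeShifts N k (k * K - 1) ↔ Int.gcd (m * k - 1) N = 1 := by
    rw [mem_coprimeShifts, Nat.cast_sub hm,
      show k * (K - m) - (k * K - 1) = -(m * k - 1) by ring, Int.neg_gcd]
  constructor
  · intro hK
    by_contra! hμ
    obtain ⟨hμ0, hμ1⟩ := mu_spec hN k
    have := hK.2 ((hshift _ hμ).mpr hμ1)
    omega
  · intro hK
    refine ⟨by simpa using hshift 0 (Nat.zero_le _), fun K' hK' => ?_⟩
    by_contra! hlt
    have := mu_le (m := K - K') (by omega)
      ((hshift _ (by omega)).mp (by rwa [Nat.sub_sub_self hlt.le]))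
    omega

theorem eq_of_dvd_Mmat_row {N k l : ℤ} {K L : ℕ} (hN : 0 < N) (hk : 0 ≤ k) (hkN : k < N)
    (hl : 0 ≤ l) (hlN : l < N) (hK : K < mu N k) (hL : L < mu N l)
    (h : N ∣ k * (l * L - 1) - (k * K - 1) * l) : k = l ∧ K = L := by
  have hkK : IsCoprime k (k * K - 1) := ⟨K, -1, by ring⟩
  have hlL : IsCoprime l (l * L - 1) := ⟨L, -1, by ring⟩
  have hshifts := coprimeShifts_eq_of_dvd_mul_sub_mul hkK hlL h
  have hKL : K = L := ((isLeast_coprimeShifts_iff_lt_mu hN k K).mpr hK).unique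
    (hshifts ▸ (isLeast_coprimeShifts_iff_lt_mu hN l L).mpr hL)
  subst hKL
  refine ⟨Int.eq_of_dvd_sub ?_ hk hkN hl hlN, rfl⟩
  rw [show k - l = -(k * (l * K - 1) - (k * K - 1) * l) by ring]
  exact h.neg_right

theorem exists_Tmat_row_dvd {N a b : ℤ} (hN : 0 < N) (ha : Int.gcd a N = 1) :
    ∃ ν, 0 ≤ ν ∧ ν < N ∧ N ∣ a * ν - b := by
  obtain ⟨x, y, hxy⟩ := Int.isCoprime_iff_gcd_eq_one.mpr ha
  obtain ⟨t, ht⟩ := (Int.mod_modEq (x * b) N).dvd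
  exact ⟨x * b % N, Int.emod_nonneg _ hN.ne', Int.emod_lt_of_pos _ hN,
    ⟨-y * b - a * t, by linear_combination b * hxy - a * ht⟩⟩

theorem exists_Mmat_row_dvd {N a b : ℤ} (hN : 0 < N) (hab : IsCoprime a b)
    (hg : 1 < Int.gcd a N) (hNa : ¬N ∣ a) :
    ∃ k : ℤ, ∃ K : ℕ, 1 < k ∧ k < N ∧ 1 < Int.gcd k N ∧ K < mu N k ∧
      N ∣ a * (k * K - 1) - b * k := by
  obtain ⟨K, hK⟩ : ∃ K, IsLeast (coprimeShifts N a b) K :=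
    ⟨_, Nat.sInf_mem (coprimeShifts_nonempty hN.ne' hab), fun _ => Nat.sInf_le⟩
  obtain ⟨v, s, hvs⟩ := Int.isCoprime_iff_gcd_eq_one.mpr hK.1
  set k := a * v % N
  obtain ⟨t, ht⟩ := (Int.mod_modEq (a * v) N).dvd
  have hrow : N ∣ a * (k * K - 1) - b * k :=
    ⟨-a * s - t * (a * K - b), by linear_combination a * hvs - (a * K - b) * ht⟩
  have hrowk : IsCoprime k (k * K - 1) := ⟨K, -1, by ring⟩
  have hgk := gcd_eq_of_dvd_mul_sub_mul hab hrowk hrow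
  have hk1 : 1 < k := by
    rcases (show k = 0 ∨ k = 1 ∨ 1 < k by have := Int.emod_nonneg (a * v) hN.ne'; omega)
      with h0 | h1 | h
    · have := Int.gcd_dvd_left a N
      rw [← hgk, h0, Int.gcd_zero_left, Int.natAbs_dvd] at this
      exact absurd this hNa
    · rw [h1, Int.gcd_one_left] at hgk
      omega
    · exact h
  refine ⟨k, K, hk1, Int.emod_lt_of_pos _ hN, hgk ▸ hg, ?_, hrow⟩
  rw [← isLeast_coprimeShifts_iff_lt_mu hN, coprimeShifts_eq_of_dvd_mul_sub_mul hab hrowk hrow]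
  exact hK

theorem exists_mem_reps_dvd {N a b : ℤ} (hN : 2 ≤ N) (hab : IsCoprime a b) :
    ∃ R ∈ reps N, N ∣ a * R 0 1 - b * R 0 0 := by
  by_cases hNa : N ∣ a
  · exact ⟨Smat, Or.inr (Or.inl rfl), by simpa [Smat] using hNa⟩
  by_cases hg : Int.gcd a N = 1
  · obtain ⟨ν, hν0, hνN, hν⟩ := exists_Tmat_row_dvd (by omega) hg
    exact ⟨Tmat ν, Or.inl ⟨ν, hν0, hνN, rfl⟩, by simpa [Tmat] using hν⟩
  have : 0 < Int.gcd a N := Int.gcd_pos_of_ne_zero_right _ (by omega)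
  obtain ⟨k, K, hk1, hkN, hkg, hKμ, hk⟩ := exists_Mmat_row_dvd (by omega) hab (by omega) hNa
  exact ⟨Mmat k K, Or.inr (Or.inr ⟨k, K, hk1, hkN, hkg, by positivity, by exact_mod_cast hKμ,
    rfl⟩), by simpa [Mmat] using hk⟩

theorem eq_of_mem_reps_of_dvd {N : ℤ} (hN : 2 ≤ N) {R R' : SL(2, ℤ)} (hR : R ∈ reps N)
    (hR' : R' ∈ reps N) (h : N ∣ R 0 0 * R' 0 1 - R 0 1 * R' 0 0) : R = R' := by
  have hgcd := gcd_eq_of_dvd_mul_sub_mul (R.isCoprime_row 0) (R'.isCoprime_row 0) h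
  rcases hR with ⟨ν, hν0, hνN, rfl⟩ | rfl | ⟨k, K, hk1, hkN, hkg, hK0, hKμ, rfl⟩ <;>
  rcases hR' with ⟨ν', hν0', hνN', rfl⟩ | rfl | ⟨l, L, hl1, hlN, hlg, hL0, hLμ, rfl⟩ <;>
  simp only [Tmat, Smat, Mmat, Matrix.of_apply, Matrix.cons_val', Matrix.cons_val_zero,
    Matrix.cons_val_one, Matrix.cons_val_fin_one, Int.one_gcd, Int.zero_gcd, mul_one, one_mul,
    mul_zero, zero_mul, mul_neg, neg_mul, sub_zero, zero_add, sub_neg_eq_add, dvd_neg,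
    dvd_zero] at h hgcd
  · rw [Int.eq_of_dvd_sub h hν0' hνN' hν0 hνN]
  · linarith [Int.le_of_dvd one_pos h]
  · omega
  · linarith [Int.le_of_dvd one_pos h]
  · rfl
  · linarith [Int.le_of_dvd (by omega) h]
  · omega
  · linarith [Int.le_of_dvd (by omega) h]
  · lift K to ℕ using hK0
    lift L to ℕ using hL0
    obtain ⟨rfl, rfl⟩ := eq_of_dvd_Mmat_row (by omega) (by omega) hkN (by omega) hlN
      (by exact_mod_cast hKμ) (by exact_mod_cast hLμ) h
    rfl

/-- Oesterlé's proposition: every `M ∈ SL₂(ℤ)` lies in `Γ⁰(N)·R` for exactly one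
matrix `R` in the list of representatives, where
`Γ⁰(N) = {γ ∈ SL₂(ℤ) : N ∣ (upper-right entry of γ)}`. -/
theorem gammaUpper0_coset_reps (N : ℤ) (hN : 2 ≤ N)
    (M : Matrix.SpecialLinearGroup (Fin 2) ℤ) :
    ∃! R : Matrix.SpecialLinearGroup (Fin 2) ℤ, R ∈ reps N ∧
      ∃ γ : Matrix.SpecialLinearGroup (Fin 2) ℤ, N ∣ γ.1 0 1 ∧ M = γ * R := by
  simp only [exists_gammaUpper0_mul_eq_iff]
  have hM := M.isCoprime_row 0
  obtain ⟨R, hR, hMR⟩ := exists_mem_reps_dvd hN hM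
  exact ⟨R, ⟨hR, hMR⟩, fun R' ⟨hR', hMR'⟩ =>
    (eq_of_mem_reps_of_dvd hN hR hR' (dvd_mul_sub_mul_of_isCoprime hM hMR hMR')).symm⟩
end

section
/- Let ℓ be a prime and n ≥ 1, and set N = ℓⁿ. Then S(N) = (ℓ^m − 1)² if n = 2m + 1, and S(N) = (ℓ^m − 1)·(ℓ^{m+1} − 1) if n = 2m + 2. -/
/-- `S(N) = Σ μ(k)·(1 − gcd(k,N)²/N)`, the sum over all `k` with `1 < k < N`,
`gcd(k, N) > 1` and `gcd(k, N)² < N`. -/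
noncomputable def weberS (N : ℤ) : ℚ :=
  ∑ k ∈ Finset.Ico (2 : ℤ) N,
    if 1 < Int.gcd k N ∧ ((Int.gcd k N : ℤ)) ^ 2 < N then
      (mu N k : ℚ) * (1 - (Int.gcd k N : ℚ) ^ 2 / (N : ℚ))
    else 0

/-!
For `N = ℓⁿ`, every `k` with `gcd(k, N) > 1` is divisible by `ℓ`, so `k − 1` is a unit mod `N`
and `μ(k) = 1`. Grouping the `k < N` by `d = gcd(k, N)`, a value taken `φ(N/d)` times, gives
`S(N) = Σ φ(N/d)(1 − d²/N)` over the divisors `1 < d` of `N` with `d² < N`, that is over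
`d = ℓ^(j+1)` with `2(j+1) < n`, and the term for such `d` is `(ℓ − 1)(ℓ^(n−2−j) − ℓ^j)`.
With `n = m + c + 1`, `c ∈ {m, m + 1}`, the sum is
`(ℓ − 1)(ℓ^c − 1)(1 + ℓ + ⋯ + ℓ^(m−1)) = (ℓ^m − 1)(ℓ^c − 1)`.
-/

open Finset

lemma mu_eq_one {N k : ℤ} (h : Int.gcd (k - 1) N = 1) : mu N k = 1 := by
  have h1 : 1 ∈ {m : ℕ | 0 < m ∧ Int.gcd ((m : ℤ) * k - 1) N = 1} := ⟨one_pos, by simpa using h⟩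
  exact le_antisymm (Nat.sInf_le h1) (Nat.sInf_mem ⟨1, h1⟩).1

lemma mu_prime_pow_eq_one {ℓ : ℕ} (hℓ : ℓ.Prime) (n : ℕ) {k : ℤ}
    (hk : 1 < Int.gcd k ((ℓ : ℤ) ^ n)) : mu ((ℓ : ℤ) ^ n) k = 1 := by
  have hp : Prime (ℓ : ℤ) := Nat.prime_iff_prime_int.mp hℓ
  have hdvd : (ℓ : ℤ) ∣ k := by
    by_contra h
    have : IsCoprime k ((ℓ : ℤ) ^ n) := ((hp.coprime_iff_not_dvd).mpr h).symm.pow_right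
    exact hk.ne' (Int.isCoprime_iff_gcd_eq_one.mp this)
  obtain ⟨t, rfl⟩ := hdvd
  exact mu_eq_one (Int.isCoprime_iff_gcd_eq_one.mp
    (show IsCoprime ((ℓ : ℤ) * t - 1) ℓ from ⟨-1, t, by ring⟩).pow_right)

noncomputable def weberWeight (N d : ℕ) : ℚ :=
  if 1 < d ∧ d ^ 2 < N then 1 - (d : ℚ) ^ 2 / N else 0

lemma weberS_eq_sum_range_gcd (N : ℕ) (hμ : ∀ k : ℤ, 1 < Int.gcd k N → mu N k = 1) :
    weberS N = ∑ k ∈ range N, weberWeight N (N.gcd k) := by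
  have hzero : ∀ k ∈ range N, k ∉ Ico 2 N → weberWeight N (N.gcd k) = 0 := by
    intro k hk hk2
    obtain rfl | rfl : k = 0 ∨ k = 1 := by
      simp only [mem_range, mem_Ico, not_and, not_lt] at hk hk2; omega
    · simp only [weberWeight, Nat.gcd_zero_right]
      rw [if_neg (fun h => by nlinarith [h.2])]
    · simp [weberWeight]
  rw [← sum_subset (fun k hk => mem_range.2 (mem_Ico.1 hk).2) hzero, weberS]
  refine sum_nbij' Int.toNat (↑) (fun k hk => ?_) (fun k hk => ?_) (fun k hk => ?_) (fun k _ => rfl)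
    (fun k hk => ?_)
  · simp only [mem_Ico] at hk ⊢; omega
  · simp only [mem_Ico, Nat.ofNat_le_cast, Nat.cast_lt] at hk ⊢; omega
  · simp only [mem_Ico] at hk; omega
  · have hk0 : (k.toNat : ℤ) = k := Int.toNat_of_nonneg (by simp only [mem_Ico] at hk; omega)
    have hgcd : Int.gcd k N = N.gcd k.toNat := by
      nth_rw 1 [← hk0]
      rw [Int.gcd_natCast_natCast, Nat.gcd_comm]
    rw [weberWeight, hgcd]
    split_ifs with h1 h2 h2
    · rw [hμ k (hgcd ▸ h1.1)]; push_cast; ring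
    · exact absurd ⟨h1.1, by exact_mod_cast h1.2⟩ h2
    · exact absurd ⟨h2.1, by exact_mod_cast h2.2⟩ h1
    · rfl

lemma sum_range_gcd_eq_sum_divisors {M : Type*} [AddCommMonoid M] (N : ℕ) (f : ℕ → M) :
    ∑ k ∈ range N, f (N.gcd k) = ∑ d ∈ N.divisors, Nat.totient (N / d) • f d := by
  rw [← sum_fiberwise_of_maps_to (t := N.divisors) (g := N.gcd)]
  · refine sum_congr rfl fun d hd => ?_
    rw [Nat.totient_div_of_dvd (Nat.dvd_of_mem_divisors hd), ← sum_const]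
    exact sum_congr rfl fun k hk => by rw [(mem_filter.mp hk).2]
  · intro k hk
    exact Nat.mem_divisors.2 ⟨Nat.gcd_dvd_left _ _, by rintro rfl; simp at hk⟩

lemma weberWeight_prime_pow_eq_zero {ℓ : ℕ} (hℓ : ℓ.Prime) {m c i : ℕ} (hc : c ≤ m + 1)
    (hi : i ∉ Ico 1 (m + 1)) : weberWeight (ℓ ^ (m + c + 1)) (ℓ ^ i) = 0 := by
  rw [weberWeight, if_neg]
  rintro ⟨h1, h2⟩
  have hi0 : 0 < i := (Nat.pow_lt_pow_iff_right hℓ.one_lt).1 (by simpa using h1)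
  rw [← pow_mul, Nat.pow_lt_pow_iff_right hℓ.one_lt] at h2
  simp only [mem_Ico] at hi
  omega

lemma totient_mul_weberWeight_prime_pow {ℓ : ℕ} (hℓ : ℓ.Prime) {c j t : ℕ} (hc : j + 1 + t ≤ c) :
    (Nat.totient (ℓ ^ (j + 1 + t + c + 1) / ℓ ^ (1 + j)) : ℚ) *
      weberWeight (ℓ ^ (j + 1 + t + c + 1)) (ℓ ^ (1 + j))
      = (ℓ - 1) * (ℓ ^ c * ℓ ^ t - ℓ ^ j) := by
  have hdiv : ℓ ^ (j + 1 + t + c + 1) / ℓ ^ (1 + j) = ℓ ^ (t + c + 1) := by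
    rw [Nat.pow_div (by omega) hℓ.pos]; congr 1; omega
  have hlt : (ℓ ^ (1 + j)) ^ 2 < ℓ ^ (j + 1 + t + c + 1) := by
    rw [← pow_mul, Nat.pow_lt_pow_iff_right hℓ.one_lt]; omega
  rw [hdiv, Nat.totient_prime_pow_succ hℓ, weberWeight,
    if_pos ⟨Nat.one_lt_pow (by omega) hℓ.one_lt, hlt⟩]
  have hℓ0 : (ℓ : ℚ) ≠ 0 := by exact_mod_cast hℓ.ne_zero
  push_cast [hℓ.one_le]
  field_simp
  ring

lemma sum_range_mul_pow_sub_pow {R : Type*} [CommRing R] (x : R) (m c : ℕ) :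
    ∑ j ∈ range m, (x - 1) * (x ^ c * x ^ (m - 1 - j) - x ^ j) = (x ^ m - 1) * (x ^ c - 1) := by
  rw [← mul_sum, sum_sub_distrib, ← mul_sum, sum_range_reflect (x ^ ·), ← geom_sum_mul]
  ring

lemma sum_divisors_totient_smul_weberWeight_prime_pow {ℓ : ℕ} (hℓ : ℓ.Prime) {m c : ℕ}
    (hmc : m ≤ c) (hc : c ≤ m + 1) :
    ∑ d ∈ (ℓ ^ (m + c + 1)).divisors,
      Nat.totient (ℓ ^ (m + c + 1) / d) • weberWeight (ℓ ^ (m + c + 1)) d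
      = ((ℓ : ℚ) ^ m - 1) * ((ℓ : ℚ) ^ c - 1) := by
  rw [Nat.sum_divisors_prime_pow hℓ,
    ← sum_subset (s₁ := Ico 1 (m + 1)) (fun i hi => by simp only [mem_Ico, mem_range] at hi ⊢; omega)
      (fun i _ hi => by rw [weberWeight_prime_pow_eq_zero hℓ hc hi, smul_zero]),
    sum_Ico_eq_sum_range, add_tsub_cancel_right, ← sum_range_mul_pow_sub_pow]
  refine sum_congr rfl fun j hj => ?_
  obtain ⟨t, rfl⟩ : ∃ t, m = j + 1 + t := ⟨m - 1 - j, by simp only [mem_range] at hj; omega⟩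
  rw [nsmul_eq_mul, show j + 1 + t - 1 - j = t by omega]
  exact totient_mul_weberWeight_prime_pow hℓ hmc

lemma weberS_prime_pow_eq {ℓ : ℕ} (hℓ : ℓ.Prime) {m c : ℕ} (hmc : m ≤ c) (hc : c ≤ m + 1) :
    weberS ((ℓ : ℤ) ^ (m + c + 1)) = ((ℓ : ℚ) ^ m - 1) * ((ℓ : ℚ) ^ c - 1) := by
  have h := weberS_eq_sum_range_gcd (ℓ ^ (m + c + 1))
    (fun k hk => by push_cast at hk ⊢; exact mu_prime_pow_eq_one hℓ _ hk)
  push_cast at h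
  rw [h, sum_range_gcd_eq_sum_divisors, sum_divisors_totient_smul_weberWeight_prime_pow hℓ hmc hc]

theorem weberS_prime_pow_general (ℓ : ℕ) (hℓ : ℓ.Prime) (n : ℕ) :
    (∀ m : ℕ, n = 2 * m + 1 →
      weberS ((ℓ : ℤ) ^ n) = ((ℓ : ℚ) ^ m - 1) ^ 2) ∧
    (∀ m : ℕ, n = 2 * m + 2 →
      weberS ((ℓ : ℤ) ^ n) = ((ℓ : ℚ) ^ m - 1) * ((ℓ : ℚ) ^ (m + 1) - 1)) := by
  refine ⟨fun m hn => ?_, fun m hn => ?_⟩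
  · rw [hn, show 2 * m + 1 = m + m + 1 by ring, weberS_prime_pow_eq hℓ le_rfl (by omega), sq]
  · rw [hn, show 2 * m + 2 = m + (m + 1) + 1 by ring]
    exact weberS_prime_pow_eq hℓ (by omega) le_rfl

/-- For `N = ℓⁿ` a prime power, `S(N) = (ℓ^m − 1)²` if `n = 2m + 1` and
`S(N) = (ℓ^m − 1)·(ℓ^{m+1} − 1)` if `n = 2m + 2`. -/
theorem weberS_prime_pow (ℓ : ℕ) (hℓ : ℓ.Prime) (n : ℕ) (hn : 1 ≤ n) :
    (∀ m : ℕ, n = 2 * m + 1 →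
      weberS ((ℓ : ℤ) ^ n) = ((ℓ : ℚ) ^ m - 1) ^ 2) ∧
    (∀ m : ℕ, n = 2 * m + 2 →
      weberS ((ℓ : ℤ) ^ n) = ((ℓ : ℚ) ^ m - 1) * ((ℓ : ℚ) ^ (m + 1) - 1)) :=
  weberS_prime_pow_general ℓ hℓ n
end
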